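/- arXiv:2605.28242 — 7 statements merged into one kernel-verified Lean document; each statement's English description precedes it below -/
import Mathlib

section
/- Let A, C be n×n real matrices, B an n×m real matrix, and F_1, F_2 arbitrary m×n real matrices. Suppose x ∈ ℝ^n satisfies xᵀMB = 0 for all words M of length at most n−1 over {A + BF_1, C + BF_2}. Then xᵀMB = 0 for all words M of length at most n−1 over {A, C}. -/
open Matrix

theorem stmt2 {n m : ℕ} (A C : Matrix (Fin n) (Fin n) ℝ)
    (B : Matrix (Fin n) (Fin m) ℝ) (F₁ F₂ : Matrix (Fin m) (Fin n) ℝ)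
    (x : Fin n → ℝ)
    (h : ∀ l : List (Matrix (Fin n) (Fin n) ℝ), l.length ≤ n - 1 →
      (∀ X ∈ l, X = A + B * F₁ ∨ X = C + B * F₂) →
      Matrix.vecMul x (l.prod * B) = 0) :
    ∀ l : List (Matrix (Fin n) (Fin n) ℝ), l.length ≤ n - 1 →
      (∀ X ∈ l, X = A ∨ X = C) → Matrix.vecMul x (l.prod * B) = 0 := by
  have main : ∀ l w : List (Matrix (Fin n) (Fin n) ℝ),
      w.length + l.length ≤ n - 1 →
      (∀ X ∈ w, X = A + B * F₁ ∨ X = C + B * F₂) →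
      (∀ X ∈ l, X = A ∨ X = C) →
      Matrix.vecMul x (w.prod * l.prod * B) = 0 := by
    intro l
    induction l with
    | nil =>
      intro w hlen hw _
      simpa using h w (by simpa using hlen) hw
    | cons X t ih =>
      intro w hlen hw hl
      obtain ⟨F, hmem⟩ : ∃ F : Matrix (Fin m) (Fin n) ℝ,
          (X + B * F = A + B * F₁ ∨ X + B * F = C + B * F₂) := by
        rcases hl X List.mem_cons_self with hX | hX
        · exact ⟨F₁, Or.inl (by rw [hX])⟩
        · exact ⟨F₂, Or.inr (by rw [hX])⟩
      have key : w.prod * (X :: t).prod =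
          (w ++ [X + B * F]).prod * t.prod - w.prod * B * (F * t.prod) := by
        rw [List.prod_append, List.prod_cons, List.prod_singleton]
        simp only [Matrix.mul_add, Matrix.add_mul, Matrix.mul_assoc]
        abel
      have h1 : Matrix.vecMul x ((w ++ [X + B * F]).prod * t.prod * B) = 0 := by
        apply ih
        · simpa [List.length_append] using hlen.trans_eq' (by simp; omega)
        · intro Y hY
          rcases List.mem_append.mp hY with hY | hY
          · exact hw Y hY
          · obtain rfl : Y = X + B * F := by simpa using hY
            exact hmem
        · exact fun Y hY => hl Y (List.mem_cons_of_mem _ hY)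
      have h0 : Matrix.vecMul x (w.prod * B) = 0 := by
        apply h w _ hw
        omega
      have h2 : Matrix.vecMul x (w.prod * B * (F * t.prod * B)) = 0 := by
        rw [← Matrix.mul_assoc, ← Matrix.vecMul_vecMul, ← Matrix.vecMul_vecMul, h0]
        simp
      calc Matrix.vecMul x (w.prod * (X :: t).prod * B)
          = Matrix.vecMul x ((w ++ [X + B * F]).prod * t.prod * B)
            - Matrix.vecMul x (w.prod * B * (F * t.prod * B)) := by
            rw [key]
            rw [Matrix.sub_mul, Matrix.vecMul_sub]
            congr 1
            rw [Matrix.mul_assoc, Matrix.mul_assoc, Matrix.mul_assoc]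
        _ = 0 := by rw [h1, h2, sub_zero]
  intro l hlen hl
  simpa using main l [] (by simpa using hlen) (by simp) hl
end

section
/- Let A, C be n×n real matrices, B an n×m real matrix, and F_1, F_2 ∈ ℝ^{m×n}. If span{im(MB) : M a word of length ≤ n−1 over {A,C}} = ℝ^n, then also span{im(MB) : M a word of length ≤ n−1 over {A+BF_1, C+BF_2}} = ℝ^n. -/
open Matrix

/-- The span of the images of `M * B` over all words `M` of length at most `k`
over `{A, C}` (the empty product is the identity). -/
noncomputable def wordSpan {n m : ℕ} (A C : Matrix (Fin n) (Fin n) ℝ)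
    (B : Matrix (Fin n) (Fin m) ℝ) (k : ℕ) : Submodule ℝ (Fin n → ℝ) :=
  ⨆ (l : List (Matrix (Fin n) (Fin n) ℝ))
    (_ : l.length ≤ k ∧ ∀ X ∈ l, X = A ∨ X = C),
    LinearMap.range (Matrix.mulVecLin (l.prod * B))

lemma word_le_wordSpan {n m : ℕ} (A C : Matrix (Fin n) (Fin n) ℝ)
    (B : Matrix (Fin n) (Fin m) ℝ) (k : ℕ) (l : List (Matrix (Fin n) (Fin n) ℝ))
    (hl : l.length ≤ k ∧ ∀ X ∈ l, X = A ∨ X = C) :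
    LinearMap.range (Matrix.mulVecLin (l.prod * B)) ≤ wordSpan A C B k :=
  le_iSup₂ (f := fun l (_ : l.length ≤ k ∧ ∀ X ∈ l, X = A ∨ X = C) =>
    LinearMap.range (Matrix.mulVecLin (l.prod * B))) l hl

lemma mul_mem_wordSpan {n m : ℕ} (A C X : Matrix (Fin n) (Fin n) ℝ)
    (B : Matrix (Fin n) (Fin m) ℝ) (k : ℕ) (hX : X = A ∨ X = C)
    (v : Fin n → ℝ) (hv : v ∈ wordSpan A C B k) :
    X.mulVec v ∈ wordSpan A C B (k + 1) := by
  have hmap : Submodule.map X.mulVecLin (wordSpan A C B k) ≤ wordSpan A C B (k + 1) := by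
    rw [wordSpan, Submodule.map_iSup]
    refine iSup_le fun l => ?_
    rw [Submodule.map_iSup]
    refine iSup_le fun hl => ?_
    rw [← LinearMap.range_comp, ← Matrix.mulVecLin_mul, ← Matrix.mul_assoc,
      ← List.prod_cons]
    exact word_le_wordSpan A C B (k + 1) (X :: l)
      ⟨by simpa using Nat.succ_le_succ hl.1,
       fun Y hY => (List.mem_cons.mp hY).elim (fun h => h ▸ hX) (hl.2 Y)⟩
  exact hmap ⟨v, hv, rfl⟩

lemma key_lemma {n m : ℕ} (A C : Matrix (Fin n) (Fin n) ℝ)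
    (B : Matrix (Fin n) (Fin m) ℝ) (F₁ F₂ : Matrix (Fin m) (Fin n) ℝ)
    (l : List (Matrix (Fin n) (Fin n) ℝ)) (hmem : ∀ X ∈ l, X = A ∨ X = C) :
    ∀ k, l.length ≤ k →
      LinearMap.range (Matrix.mulVecLin (l.prod * B)) ≤
        wordSpan (A + B * F₁) (C + B * F₂) B k := by
  induction l with
  | nil =>
      intro k _
      simpa using word_le_wordSpan (A + B * F₁) (C + B * F₂) B k []
        ⟨by simp, by simp⟩
  | cons X t ih =>
      intro k hk
      obtain ⟨k', rfl⟩ : ∃ k', k = k' + 1 := by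
        cases k with
        | zero => simp at hk
        | succ k' => exact ⟨k', rfl⟩
      rintro v ⟨u, rfl⟩
      have hu : (t.prod * B).mulVecLin u ∈ wordSpan (A + B * F₁) (C + B * F₂) B k' :=
        ih (fun Y hY => hmem Y (List.mem_cons_of_mem _ hY)) k'
          (by simpa using Nat.le_of_succ_le_succ hk) ⟨u, rfl⟩
      set w := (t.prod * B).mulVecLin u with hw
      have hXw : ((X :: t).prod * B).mulVecLin u = X.mulVec w := by
        simp [hw, Matrix.mulVecLin_apply, List.prod_cons, Matrix.mul_assoc,
          Matrix.mulVec_mulVec]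
      rw [hXw]
      have hB : ∀ F : Matrix (Fin m) (Fin n) ℝ,
          (B * F).mulVec w ∈ wordSpan (A + B * F₁) (C + B * F₂) B (k' + 1) := by
        intro F
        have : (B * F).mulVec w = ((([] : List (Matrix (Fin n) (Fin n) ℝ)).prod * B).mulVecLin)
            (F.mulVec w) := by
          simp [Matrix.mulVecLin_apply, Matrix.mulVec_mulVec]
        rw [this]
        exact word_le_wordSpan (A + B * F₁) (C + B * F₂) B (k' + 1) []
          ⟨by simp, by simp⟩ ⟨F.mulVec w, rfl⟩
      rcases hmem X (List.mem_cons_self) with hX | hX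
      · have h1 : (A + B * F₁).mulVec w ∈ wordSpan (A + B * F₁) (C + B * F₂) B (k' + 1) :=
          mul_mem_wordSpan _ _ _ _ _ (Or.inl rfl) w hu
        have h2 : X.mulVec w = (A + B * F₁).mulVec w - (B * F₁).mulVec w := by
          rw [Matrix.add_mulVec, hX, add_sub_cancel_right]
        rw [h2]
        exact Submodule.sub_mem _ h1 (hB F₁)
      · have h1 : (C + B * F₂).mulVec w ∈ wordSpan (A + B * F₁) (C + B * F₂) B (k' + 1) :=
          mul_mem_wordSpan _ _ _ _ _ (Or.inr rfl) w hu
        have h2 : X.mulVec w = (C + B * F₂).mulVec w - (B * F₂).mulVec w := by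
          rw [Matrix.add_mulVec, hX, add_sub_cancel_right]
        rw [h2]
        exact Submodule.sub_mem _ h1 (hB F₂)

theorem stmt3 {n m : ℕ} (A C : Matrix (Fin n) (Fin n) ℝ)
    (B : Matrix (Fin n) (Fin m) ℝ) (F₁ F₂ : Matrix (Fin m) (Fin n) ℝ)
    (h : wordSpan A C B (n - 1) = ⊤) :
    wordSpan (A + B * F₁) (C + B * F₂) B (n - 1) = ⊤ := by
  rw [eq_top_iff, ← h]
  exact iSup₂_le fun l hl => key_lemma A C B F₁ F₂ l hl.2 (n - 1) hl.1
end

section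
/- Let A, C ∈ ℝ^{n×n} and let 𝓛(M) = MA + AᵀM + CᵀMC on symmetric matrices, with adjoint 𝓛*(M) = AM + MAᵀ + CMCᵀ. If there exists a positive definite symmetric matrix P with 𝓛(P) positive definite, then every positive semidefinite symmetric S with 𝓛*(S) ⪯ 0 must be zero. -/
open Matrix

private lemma diag_entry_nonneg {n : ℕ} {X : Matrix (Fin n) (Fin n) ℝ}
    (hX : X.PosSemidef) (i : Fin n) : 0 ≤ X i i := by
  have h := hX.dotProduct_mulVec_nonneg (Pi.single i 1)
  simpa [dotProduct, mulVec, Pi.single_apply, Finset.mul_sum] using h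

private lemma trace_nonneg_of_psd {n : ℕ} {X : Matrix (Fin n) (Fin n) ℝ}
    (hX : X.PosSemidef) : 0 ≤ X.trace := by
  rw [Matrix.trace]
  exact Finset.sum_nonneg fun i _ => diag_entry_nonneg hX i

private lemma trace_mul_psd_nonneg {n : ℕ} {X Y : Matrix (Fin n) (Fin n) ℝ}
    (hX : X.PosSemidef) (hY : Y.PosSemidef) : 0 ≤ (X * Y).trace := by
  obtain ⟨B, rfl⟩ : ∃ B : Matrix (Fin n) (Fin n) ℝ, Y = Bᴴ * B := by
    open scoped MatrixOrder in exact CStarAlgebra.nonneg_iff_eq_star_mul_self.mp hY.nonneg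
  have h1 : (X * (Bᴴ * B)).trace = (B * X * Bᴴ).trace := by
    rw [← mul_assoc, Matrix.trace_mul_comm, ← mul_assoc]
  rw [h1]
  exact trace_nonneg_of_psd (hX.mul_mul_conjTranspose_same B)

private lemma eq_zero_of_trace_mul_eq_zero {n : ℕ} {X Y : Matrix (Fin n) (Fin n) ℝ}
    (hX : X.PosDef) (hY : Y.PosSemidef) (h : (X * Y).trace = 0) : Y = 0 := by
  obtain ⟨B, rfl⟩ : ∃ B : Matrix (Fin n) (Fin n) ℝ, Y = Bᴴ * B := by
    open scoped MatrixOrder in exact CStarAlgebra.nonneg_iff_eq_star_mul_self.mp hY.nonneg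
  have h1 : (B * X * Bᴴ).trace = 0 := by
    rw [← h, ← mul_assoc]
    exact (Matrix.trace_mul_cycle X Bᴴ B).symm
  have hM : (B * X * Bᴴ).PosSemidef := hX.posSemidef.mul_mul_conjTranspose_same B
  have hdiag : ∀ i, (B * X * Bᴴ) i i = 0 := by
    intro i
    have := (Finset.sum_eq_zero_iff_of_nonneg
      (fun i _ => diag_entry_nonneg hM i)).mp h1 i (Finset.mem_univ i)
    exact this
  have hB : B = 0 := by
    ext i j
    by_contra hne
    have hrow : (fun k => B i k) ≠ 0 := by
      intro h0
      exact hne (by simpa using congrFun h0 j)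
    have hpos : 0 < star (fun k => B i k) ⬝ᵥ X *ᵥ (fun k => B i k) := hX.dotProduct_mulVec_pos hrow
    have hval : (B * X * Bᴴ) i i = star (fun k => B i k) ⬝ᵥ X *ᵥ (fun k => B i k) := by
      simp only [Matrix.mul_apply, dotProduct, mulVec, conjTranspose_apply, Finset.sum_mul,
        Finset.mul_sum, Pi.star_apply, star_trivial]
      rw [Finset.sum_comm]
      exact Finset.sum_congr rfl fun y _ => Finset.sum_congr rfl fun x _ => by ring
    rw [hdiag i] at hval
    exact absurd hval.symm (ne_of_gt hpos)
  rw [hB]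
  simp

theorem stmt5 {n : ℕ} (A C : Matrix (Fin n) (Fin n) ℝ)
    (P : Matrix (Fin n) (Fin n) ℝ) (hP : P.PosDef)
    (hLP : (P * A + Aᵀ * P + Cᵀ * P * C).PosDef)
    (S : Matrix (Fin n) (Fin n) ℝ) (hS : S.PosSemidef)
    (hLS : (-(A * S + S * Aᵀ + C * S * Cᵀ)).PosSemidef) :
    S = 0 := by
  set L := P * A + Aᵀ * P + Cᵀ * P * C with hL
  have key : (L * S).trace = (P * (A * S + S * Aᵀ + C * S * Cᵀ)).trace := by
    simp only [hL, Matrix.add_mul, Matrix.mul_add, Matrix.trace_add]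
    congr 1
    · congr 1
      · rw [mul_assoc]
      · conv_rhs => rw [← mul_assoc, Matrix.trace_mul_cycle P S Aᵀ]
    · conv_rhs => rw [← mul_assoc, Matrix.trace_mul_comm, ← mul_assoc, ← mul_assoc]
  have h1 : 0 ≤ (L * S).trace := trace_mul_psd_nonneg hLP.posSemidef hS
  have h2 : 0 ≤ (P * -(A * S + S * Aᵀ + C * S * Cᵀ)).trace :=
    trace_mul_psd_nonneg hP.posSemidef hLS
  have h3 : (P * -(A * S + S * Aᵀ + C * S * Cᵀ)).trace
      = -(P * (A * S + S * Aᵀ + C * S * Cᵀ)).trace := by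
    rw [Matrix.mul_neg, Matrix.trace_neg]
  have h4 : (L * S).trace = 0 := by
    rw [h3] at h2
    linarith [key ▸ h1, key]
  exact eq_zero_of_trace_mul_eq_zero hLP hS h4
end

section
/- Let A, C ∈ ℝ^{n×n} and let 𝓛(M) = MA + AᵀM + CᵀMC with adjoint 𝓛*(M) = AM + MAᵀ + CMCᵀ on symmetric matrices. Suppose that every nonzero positive semidefinite S with 𝓛*(S) ⪯ 0 is zero (i.e., S ⪰ 0 and 𝓛*(S) ⪯ 0 imply S = 0). Then there exists a positive definite P with 𝓛(P) positive definite. -/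
open Matrix

namespace Stmt6Aux

variable {n : ℕ}

def quad (M : Matrix (Fin n) (Fin n) ℝ) (x : Fin n → ℝ) : ℝ := x ⬝ᵥ (M *ᵥ x)

lemma quad_eq_sum (M : Matrix (Fin n) (Fin n) ℝ) (x : Fin n → ℝ) :
    quad M x = ∑ i, ∑ j, x i * M i j * x j := by
  simp only [quad, dotProduct, mulVec, Finset.mul_sum]
  exact Finset.sum_congr rfl fun i _ => Finset.sum_congr rfl fun j _ => by ring

lemma quad_transpose (M : Matrix (Fin n) (Fin n) ℝ) (x : Fin n → ℝ) :
    quad Mᵀ x = quad M x := by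
  rw [quad_eq_sum, quad_eq_sum, Finset.sum_comm]
  exact Finset.sum_congr rfl fun i _ => Finset.sum_congr rfl fun j _ => by
    simp [transpose_apply]; ring

lemma quad_add (M N : Matrix (Fin n) (Fin n) ℝ) (x : Fin n → ℝ) :
    quad (M + N) x = quad M x + quad N x := by
  simp [quad, add_mulVec, dotProduct_add]

lemma quad_smul (c : ℝ) (M : Matrix (Fin n) (Fin n) ℝ) (x : Fin n → ℝ) :
    quad (c • M) x = c * quad M x := by
  simp [quad, smul_mulVec, dotProduct_smul]

lemma quad_smul_vec (c : ℝ) (M : Matrix (Fin n) (Fin n) ℝ) (x : Fin n → ℝ) :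
    quad M (c • x) = c ^ 2 * quad M x := by
  simp [quad, mulVec_smul, dotProduct_smul, smul_dotProduct]
  ring

def ip (T M : Matrix (Fin n) (Fin n) ℝ) : ℝ := ∑ i, ∑ j, T i j * M i j

lemma ip_eq_trace (T M : Matrix (Fin n) (Fin n) ℝ) : ip T M = trace (Tᵀ * M) := by
  simp only [ip, trace, diag, mul_apply, transpose_apply]
  rw [Finset.sum_comm]

lemma ip_vecMulVec (T : Matrix (Fin n) (Fin n) ℝ) (x : Fin n → ℝ) :
    ip T (vecMulVec x x) = quad T x := by
  rw [quad_eq_sum]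
  exact Finset.sum_congr rfl fun i _ => Finset.sum_congr rfl fun j _ => by
    simp [vecMulVec_apply]; ring

lemma ip_adjoint (A C T M : Matrix (Fin n) (Fin n) ℝ) :
    ip T (M * A + Aᵀ * M + Cᵀ * M * C) = ip (A * T + T * Aᵀ + C * T * Cᵀ) M := by
  rw [ip_eq_trace, ip_eq_trace]
  rw [mul_add, mul_add, trace_add, trace_add]
  rw [transpose_add, transpose_add, add_mul, add_mul, trace_add, trace_add]
  have e1 : (Tᵀ * (M * A)).trace = ((T * Aᵀ)ᵀ * M).trace := by
    rw [← mul_assoc, trace_mul_cycle, transpose_mul, transpose_transpose]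
  have e2 : (Tᵀ * (Aᵀ * M)).trace = ((A * T)ᵀ * M).trace := by
    rw [transpose_mul, mul_assoc]
  have e3 : (Tᵀ * (Cᵀ * M * C)).trace = ((C * T * Cᵀ)ᵀ * M).trace := by
    rw [← mul_assoc, ← mul_assoc, trace_mul_cycle, transpose_mul, transpose_mul,
      transpose_transpose]
  linarith [e1, e2, e3]

end Stmt6Aux

namespace Stmt6Aux

variable {n : ℕ}

lemma dot_self_pos {x : Fin n → ℝ} (hx : x ≠ 0) : 0 < x ⬝ᵥ x := by
  have h0 : 0 ≤ x ⬝ᵥ x := by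
    simp only [dotProduct]
    exact Finset.sum_nonneg fun i _ => mul_self_nonneg _
  rcases h0.lt_or_eq with h | h
  · exact h
  · exfalso; apply hx
    funext i
    have := Finset.sum_eq_zero_iff_of_nonneg (fun j (_ : j ∈ Finset.univ) => mul_self_nonneg (x j)) |>.mp h.symm i (Finset.mem_univ i)
    exact mul_self_eq_zero.mp this

lemma quad_one {x : Fin n → ℝ} : quad (1 : Matrix (Fin n) (Fin n) ℝ) x = x ⬝ᵥ x := by
  simp [quad, one_mulVec]

lemma quad_vecMulVec (x y : Fin n → ℝ) :
    quad (vecMulVec x x) y = (x ⬝ᵥ y) ^ 2 := by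
  rw [quad_eq_sum]
  simp only [vecMulVec_apply, dotProduct, sq, Finset.sum_mul_sum]
  exact Finset.sum_congr rfl fun i _ => Finset.sum_congr rfl fun j _ => by ring

/-- The open convex cone of matrices with positive-definite quadratic form. -/
def U (n : ℕ) : Set (Matrix (Fin n) (Fin n) ℝ) :=
  {M | ∀ x : Fin n → ℝ, x ≠ 0 → 0 < quad M x}

lemma convex_U : Convex ℝ (U n) := by
  intro M hM N hN a b ha hb hab
  intro x hx
  rw [quad_add, quad_smul, quad_smul]
  have h1 := hM x hx
  have h2 := hN x hx
  rcases ha.lt_or_eq with ha' | ha'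
  · have := mul_nonneg hb h2.le
    nlinarith
  · have hb1 : b = 1 := by linarith [hab, ha'.symm]
    rw [← ha', hb1]
    nlinarith

lemma one_mem_U : (1 : Matrix (Fin n) (Fin n) ℝ) ∈ U n := fun x hx => by
  rw [quad_one]; exact dot_self_pos hx

lemma psd_add_smul_one_mem_U {M : Matrix (Fin n) (Fin n) ℝ}
    (hM : ∀ x : Fin n → ℝ, 0 ≤ quad M x) {ε : ℝ} (hε : 0 < ε) :
    M + ε • 1 ∈ U n := fun x hx => by
  rw [quad_add, quad_smul, quad_one]
  have := hM x
  have := dot_self_pos hx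
  nlinarith

end Stmt6Aux

namespace Stmt6Aux

variable {n : ℕ}

attribute [local instance] Matrix.normedAddCommGroup Matrix.normedSpace

lemma quad_sub (M N : Matrix (Fin n) (Fin n) ℝ) (x : Fin n → ℝ) :
    quad (N - M) x = quad N x - quad M x := by
  simp [quad, sub_mulVec, dotProduct_sub]

lemma abs_quad_le (B : Matrix (Fin n) (Fin n) ℝ) (x : Fin n → ℝ) :
    |quad B x| ≤ (n : ℝ) ^ 2 * ‖B‖ * ‖x‖ ^ 2 := by
  rw [quad_eq_sum]
  calc |∑ i, ∑ j, x i * B i j * x j| ≤ ∑ i, |∑ j, x i * B i j * x j| :=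
        Finset.abs_sum_le_sum_abs _ _
    _ ≤ ∑ i : Fin n, ∑ j : Fin n, |x i * B i j * x j| :=
        Finset.sum_le_sum fun i _ => Finset.abs_sum_le_sum_abs _ _
    _ ≤ ∑ _i : Fin n, ∑ _j : Fin n, ‖x‖ * ‖B‖ * ‖x‖ := by
        refine Finset.sum_le_sum fun i _ => Finset.sum_le_sum fun j _ => ?_
        rw [abs_mul, abs_mul]
        have h1 : |x i| ≤ ‖x‖ := by
          simpa [Real.norm_eq_abs] using norm_le_pi_norm x i
        have h2 : |x j| ≤ ‖x‖ := by
          simpa [Real.norm_eq_abs] using norm_le_pi_norm x j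
        have h3 : |B i j| ≤ ‖B‖ := by
          simpa [Real.norm_eq_abs] using B.norm_entry_le_entrywise_sup_norm (i := i) (j := j)
        have hxB : |x i| * |B i j| ≤ ‖x‖ * ‖B‖ :=
          mul_le_mul h1 h3 (abs_nonneg _) (norm_nonneg _)
        exact mul_le_mul hxB h2 (abs_nonneg _) (by positivity)
    _ = (n : ℝ) ^ 2 * ‖B‖ * ‖x‖ ^ 2 := by
        simp [Finset.sum_const, Finset.card_univ]
        ring

lemma quad_continuous (M : Matrix (Fin n) (Fin n) ℝ) : Continuous fun x : Fin n → ℝ => quad M x := by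
  have : (fun x : Fin n → ℝ => quad M x) = fun x => ∑ i, ∑ j, x i * M i j * x j :=
    funext (quad_eq_sum M)
  rw [this]
  refine continuous_finset_sum _ fun i _ => continuous_finset_sum _ fun j _ => ?_
  exact ((continuous_apply i).mul continuous_const).mul (continuous_apply j)

lemma isOpen_U : IsOpen (U n) := by
  rcases Nat.eq_zero_or_pos n with h0 | hn
  · have : U n = Set.univ := by
      apply Set.eq_univ_iff_forall.mpr
      intro M x hx
      subst h0
      exact absurd (funext fun i => i.elim0) hx
    rw [this]; exact isOpen_univ
  · refine Metric.isOpen_iff.mpr ?_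
    intro M hM
    haveI : Nonempty (Fin n) := ⟨⟨0, hn⟩⟩
    have hcs : IsCompact (Metric.sphere (0 : Fin n → ℝ) 1) := isCompact_sphere 0 1
    have hne : (Metric.sphere (0 : Fin n → ℝ) 1).Nonempty := by
      refine ⟨fun _ => 1, ?_⟩
      rw [mem_sphere_zero_iff_norm]
      simpa using pi_norm_const' (ι := Fin n) (1 : ℝ)
    obtain ⟨x₀, hx₀mem, hx₀min⟩ := hcs.exists_isMinOn hne (quad_continuous M).continuousOn
    set ε := quad M x₀ with hεdef
    have hx₀norm : ‖x₀‖ = 1 := mem_sphere_zero_iff_norm.mp hx₀mem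
    have hx₀ne : x₀ ≠ 0 := by
      intro h; rw [h] at hx₀norm; simp at hx₀norm
    have hε : 0 < ε := hM x₀ hx₀ne
    refine ⟨ε / ((n : ℝ) ^ 2 + 1), by positivity, ?_⟩
    intro N hN x hx
    have hNM : ‖N - M‖ < ε / ((n : ℝ) ^ 2 + 1) := by
      rw [Metric.mem_ball, dist_eq_norm] at hN
      exact hN
    have hcpos : (0 : ℝ) < ‖x‖ := norm_pos_iff.mpr hx
    set y := ‖x‖⁻¹ • x with hydef
    have hy : ‖y‖ = 1 := by
      rw [hydef, norm_smul, Real.norm_eq_abs, abs_inv, abs_of_pos hcpos,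
        inv_mul_cancel₀ hcpos.ne']
    have hymem : y ∈ Metric.sphere (0 : Fin n → ℝ) 1 := mem_sphere_zero_iff_norm.mpr hy
    have h1 : ε ≤ quad M y := hx₀min hymem
    have h2 : |quad (N - M) y| ≤ (n : ℝ) ^ 2 * ‖N - M‖ := by
      have := abs_quad_le (N - M) y
      rw [hy] at this
      simpa using this
    have h3 : quad N y = quad M y + quad (N - M) y := by
      rw [quad_sub]; ring
    have hNy : 0 < quad N y := by
      have hn2 : (0 : ℝ) ≤ (n : ℝ) ^ 2 := by positivity
      have := abs_le.mp h2
      have hb : (n : ℝ) ^ 2 * ‖N - M‖ < (n:ℝ)^2 * (ε / ((n : ℝ) ^ 2 + 1)) + ε / ((n:ℝ)^2+1) := by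
        nlinarith [norm_nonneg (N - M)]
      have heq : (n:ℝ)^2 * (ε / ((n : ℝ) ^ 2 + 1)) + ε / ((n:ℝ)^2+1) = ε := by
        field_simp
      rw [heq] at hb
      linarith [h1, (abs_le.mp h2).1, h3.le]
    have hxy : x = ‖x‖ • y := by
      rw [hydef, smul_smul, mul_inv_cancel₀ hcpos.ne', one_smul]
    rw [hxy, quad_smul_vec]
    positivity

end Stmt6Aux

namespace Stmt6Aux

variable {n : ℕ}

attribute [local instance] Matrix.normedAddCommGroup Matrix.normedSpace

lemma quad_neg (M : Matrix (Fin n) (Fin n) ℝ) (x : Fin n → ℝ) :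
    quad (-M) x = -quad M x := by
  simp [quad, neg_mulVec, dotProduct_neg]

lemma herm_of_symm {M : Matrix (Fin n) (Fin n) ℝ} (h : Mᵀ = M) : M.IsHermitian := by
  have : Mᴴ = Mᵀ := Matrix.ext fun i j => by
    rw [conjTranspose_apply, transpose_apply, star_trivial]
  exact this.trans h

lemma posDef_iff' {M : Matrix (Fin n) (Fin n) ℝ} :
    M.PosDef ↔ M.IsHermitian ∧ ∀ x, x ≠ 0 → 0 < quad M x := by
  simp [Matrix.posDef_iff_dotProduct_mulVec, quad]

lemma posSemidef_iff' {M : Matrix (Fin n) (Fin n) ℝ} :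
    M.PosSemidef ↔ M.IsHermitian ∧ ∀ x, 0 ≤ quad M x := by
  simp [Matrix.posSemidef_iff_dotProduct_mulVec, quad]

/-- The Lyapunov-type operator as a linear map. -/
def Lmap (A C : Matrix (Fin n) (Fin n) ℝ) :
    Matrix (Fin n) (Fin n) ℝ →ₗ[ℝ] Matrix (Fin n) (Fin n) ℝ where
  toFun M := M * A + Aᵀ * M + Cᵀ * M * C
  map_add' M N := by
    simp only [add_mul, mul_add]
    abel
  map_smul' c M := by
    simp only [RingHom.id_apply, Matrix.smul_mul, Matrix.mul_smul, smul_add]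

lemma Lmap_apply (A C M : Matrix (Fin n) (Fin n) ℝ) :
    Lmap A C M = M * A + Aᵀ * M + Cᵀ * M * C := rfl

lemma L_transpose (A C M : Matrix (Fin n) (Fin n) ℝ) :
    (M * A + Aᵀ * M + Cᵀ * M * C)ᵀ = Mᵀ * A + Aᵀ * Mᵀ + Cᵀ * Mᵀ * C := by
  rw [transpose_add, transpose_add, transpose_mul, transpose_mul, transpose_mul,
    transpose_mul, transpose_transpose, transpose_transpose, ← mul_assoc]
  abel

lemma Lstar_transpose (A C S : Matrix (Fin n) (Fin n) ℝ) (hS : Sᵀ = S) :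
    (A * S + S * Aᵀ + C * S * Cᵀ)ᵀ = A * S + S * Aᵀ + C * S * Cᵀ := by
  rw [transpose_add, transpose_add, transpose_mul, transpose_mul, transpose_mul,
    transpose_mul, transpose_transpose, transpose_transpose, hS, ← mul_assoc]
  abel

lemma ip_add_left (T T' M : Matrix (Fin n) (Fin n) ℝ) :
    ip (T + T') M = ip T M + ip T' M := by
  simp [ip, add_mul, Finset.sum_add_distrib]

lemma ip_transpose_left (T M : Matrix (Fin n) (Fin n) ℝ) :
    ip Tᵀ M = ip T Mᵀ := by
  unfold ip
  rw [Finset.sum_comm]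
  simp [transpose_apply]

lemma ip_one (T : Matrix (Fin n) (Fin n) ℝ) : ip T 1 = trace T := by
  simp [ip, Matrix.one_apply, trace]

lemma f_repr (f : Matrix (Fin n) (Fin n) ℝ →L[ℝ] ℝ) (M : Matrix (Fin n) (Fin n) ℝ) :
    f M = ip (Matrix.of fun i j => f (Matrix.single i j 1)) M := by
  conv_lhs => rw [matrix_eq_sum_single M]
  rw [map_sum]
  unfold ip
  refine Finset.sum_congr rfl fun i _ => ?_
  rw [map_sum]
  refine Finset.sum_congr rfl fun j _ => ?_
  have : Matrix.single i j (M i j) = (M i j) • Matrix.single i j (1 : ℝ) := by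
    rw [smul_single, smul_eq_mul, mul_one]
  rw [this, _root_.map_smul, smul_eq_mul, Matrix.of_apply, mul_comm]

end Stmt6Aux

namespace Stmt6Aux

variable {n : ℕ}

attribute [local instance] Matrix.normedAddCommGroup Matrix.normedSpace

theorem key (A C : Matrix (Fin n) (Fin n) ℝ)
    (h : ∀ S : Matrix (Fin n) (Fin n) ℝ, S.PosSemidef →
      (-(A * S + S * Aᵀ + C * S * Cᵀ)).PosSemidef → S = 0) :
    ∃ P : Matrix (Fin n) (Fin n) ℝ, P.PosDef ∧
      (P * A + Aᵀ * P + Cᵀ * P * C).PosDef := by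
  by_contra hcon
  push_neg at hcon
  have hdisj : Disjoint (U n) ((Lmap A C) '' U n) := by
    rw [Set.disjoint_left]
    rintro Q hQ ⟨M, hM, rfl⟩
    set P := (2⁻¹ : ℝ) • (M + Mᵀ) with hP
    have hPsym : Pᵀ = P := by
      rw [hP, transpose_smul, transpose_add, transpose_transpose, add_comm]
    have hquadP : ∀ x, quad P x = quad M x := fun x => by
      rw [hP, quad_smul, quad_add, quad_transpose]; ring
    have hPpos : P.PosDef :=
      posDef_iff'.mpr ⟨herm_of_symm hPsym, fun x hx => by rw [hquadP]; exact hM x hx⟩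
    apply hcon P hPpos
    refine posDef_iff'.mpr ⟨?_, ?_⟩
    · exact herm_of_symm (by rw [L_transpose, hPsym])
    · intro x hx
      have hLP : P * A + Aᵀ * P + Cᵀ * P * C
          = (2⁻¹ : ℝ) • (Lmap A C M + (Lmap A C M)ᵀ) := by
        rw [← Lmap_apply, hP, _root_.map_smul, map_add]
        rw [Lmap_apply A C Mᵀ, ← L_transpose, ← Lmap_apply A C M]
      rw [hLP, quad_smul, quad_add, quad_transpose]
      have hq := hQ x hx
      linarith
  obtain ⟨f, u, hfU, hfV⟩ :=
    geometric_hahn_banach_open convex_U isOpen_U (convex_U.linear_image (Lmap A C)) hdisj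
  have hsmul_mem : ∀ ε : ℝ, 0 < ε → (ε • (1 : Matrix (Fin n) (Fin n) ℝ)) ∈ U n :=
    fun ε hε x hx => by
      rw [quad_smul, quad_one]; exact mul_pos hε (dot_self_pos hx)
  have hf1u : f 1 < u := by simpa using hfU 1 one_mem_U
  have hu0 : 0 ≤ u := by
    by_contra hu
    push_neg at hu
    have h1 : ∀ ε : ℝ, 0 < ε → ε * f 1 < u := fun ε hε => by
      have := hfU _ (hsmul_mem ε hε)
      rwa [_root_.map_smul, smul_eq_mul] at this
    have hf1 : f 1 < 0 := by linarith
    have hεpos : 0 < u / (2 * f 1) := div_pos_of_neg_of_neg hu (by linarith)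
    have h2 := h1 _ hεpos
    have h3 : (u / (2 * f 1)) * f 1 = u / 2 := by
      field_simp [ne_of_lt hf1]
    rw [h3] at h2
    linarith
  have hu0' : u ≤ 0 := by
    have h1 : ∀ ε : ℝ, 0 < ε → u ≤ ε * f (Lmap A C 1) := fun ε hε => by
      have := hfV _ ⟨ε • 1, hsmul_mem ε hε, rfl⟩
      rwa [_root_.map_smul, _root_.map_smul, smul_eq_mul] at this
    by_contra hu
    push_neg at hu
    set c := f (Lmap A C 1) with hc
    have hcpos : 0 < c := by
      have := h1 1 one_pos
      rw [one_mul] at this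
      linarith
    have h2 := h1 (u / (2 * c)) (div_pos hu (by linarith))
    have h3 : (u / (2 * c)) * c = u / 2 := by
      field_simp
    rw [h3] at h2
    linarith
  have hu : u = 0 := le_antisymm hu0' hu0
  subst hu
  have hf1neg : f 1 < 0 := hf1u
  set T : Matrix (Fin n) (Fin n) ℝ := Matrix.of fun i j => f (Matrix.single i j 1) with hT
  have hrep : ∀ M, f M = ip T M := f_repr f
  have hfPSD : ∀ x : Fin n → ℝ, f (vecMulVec x x) ≤ 0 := by
    intro x
    have hmem : ∀ ε : ℝ, 0 < ε → vecMulVec x x + ε • 1 ∈ U n := fun ε hε =>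
      psd_add_smul_one_mem_U (fun y => by rw [quad_vecMulVec]; positivity) hε
    have hlt : ∀ ε : ℝ, 0 < ε → f (vecMulVec x x) + ε * f 1 < 0 := fun ε hε => by
      have := hfU _ (hmem ε hε)
      rwa [map_add, _root_.map_smul, smul_eq_mul] at this
    by_contra hpos
    push_neg at hpos
    have hε : (0:ℝ) < f (vecMulVec x x) / (2 * (-f 1)) := div_pos hpos (by linarith)
    have h2 := hlt _ hε
    have h3 : (f (vecMulVec x x) / (2 * (-f 1))) * f 1 = - f (vecMulVec x x) / 2 := by
      field_simp [ne_of_lt hf1neg]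
    rw [h3] at h2
    linarith
  have hfLPSD : ∀ x : Fin n → ℝ, 0 ≤ f (Lmap A C (vecMulVec x x)) := by
    intro x
    have hmem : ∀ ε : ℝ, 0 < ε → vecMulVec x x + ε • 1 ∈ U n := fun ε hε =>
      psd_add_smul_one_mem_U (fun y => by rw [quad_vecMulVec]; positivity) hε
    have hle : ∀ ε : ℝ, 0 < ε → 0 ≤ f (Lmap A C (vecMulVec x x)) + ε * f (Lmap A C 1) :=
      fun ε hε => by
        have := hfV _ ⟨vecMulVec x x + ε • 1, hmem ε hε, rfl⟩
        rwa [map_add, map_add, _root_.map_smul, _root_.map_smul, smul_eq_mul] at this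
    by_contra hneg
    push_neg at hneg
    set a := f (Lmap A C (vecMulVec x x)) with ha
    set b := f (Lmap A C 1) with hb
    rcases le_or_gt b 0 with hb0 | hb0
    · have := hle 1 one_pos
      rw [one_mul] at this
      linarith
    · have hε : (0:ℝ) < -a / (2 * b) := div_pos (by linarith) (by linarith)
      have h2 := hle _ hε
      have h3 : (-a / (2 * b)) * b = -a / 2 := by
        field_simp
      rw [h3] at h2
      linarith
  set S : Matrix (Fin n) (Fin n) ℝ := (-(2⁻¹ : ℝ)) • (T + Tᵀ) with hS
  have hSsym : Sᵀ = S := by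
    rw [hS, transpose_smul, transpose_add, transpose_transpose, add_comm]
  have hquadS : ∀ x, quad S x = - f (vecMulVec x x) := fun x => by
    rw [hS, quad_smul, quad_add, quad_transpose, hrep, ip_vecMulVec]
    ring
  have hSpsd : S.PosSemidef :=
    posSemidef_iff'.mpr ⟨herm_of_symm hSsym, fun x => by
      rw [hquadS]; linarith [hfPSD x]⟩
  have hvsym : ∀ x : Fin n → ℝ, (vecMulVec x x)ᵀ = vecMulVec x x := fun x =>
    Matrix.ext fun i j => by simp [vecMulVec_apply, mul_comm]
  have hquadLS : ∀ x, quad (A * S + S * Aᵀ + C * S * Cᵀ) x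
      = - f (Lmap A C (vecMulVec x x)) := by
    intro x
    rw [← ip_vecMulVec, ← ip_adjoint A C S (vecMulVec x x)]
    have h4 : ip S (vecMulVec x x * A + Aᵀ * vecMulVec x x + Cᵀ * vecMulVec x x * C)
        = ip S (Lmap A C (vecMulVec x x)) := by rw [Lmap_apply]
    rw [h4, hS]
    have hsmul : ∀ (c : ℝ) (T' M : Matrix (Fin n) (Fin n) ℝ), ip (c • T') M = c * ip T' M := by
      intro c T' M
      simp [ip, Finset.mul_sum, mul_assoc]
    rw [hsmul, ip_add_left, ip_transpose_left]
    have hLsym : (Lmap A C (vecMulVec x x))ᵀ = Lmap A C (vecMulVec x x) := by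
      rw [Lmap_apply, L_transpose, hvsym]
    rw [hLsym, ← hrep]
    ring
  have hLSpsd : (-(A * S + S * Aᵀ + C * S * Cᵀ)).PosSemidef := by
    refine posSemidef_iff'.mpr ⟨?_, ?_⟩
    · apply herm_of_symm
      rw [transpose_neg, Lstar_transpose A C S hSsym]
    · intro x
      rw [quad_neg, hquadLS]
      linarith [hfLPSD x]
  have hS0 : S = 0 := h S hSpsd hLSpsd
  have htr : trace S = - f 1 := by
    rw [hS, trace_smul, trace_add, trace_transpose, hrep 1, ip_one]
    simp
    ring
  rw [hS0, trace_zero] at htr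
  linarith

end Stmt6Aux

theorem stmt6 {n : ℕ} (A C : Matrix (Fin n) (Fin n) ℝ)
    (h : ∀ S : Matrix (Fin n) (Fin n) ℝ, S.PosSemidef →
      (-(A * S + S * Aᵀ + C * S * Cᵀ)).PosSemidef → S = 0) :
    ∃ P : Matrix (Fin n) (Fin n) ℝ, P.PosDef ∧
      (P * A + Aᵀ * P + Cᵀ * P * C).PosDef := by
  exact Stmt6Aux.key A C h
end

section
/- Let A, C ∈ ℝ^{n×n} and 𝓛*(M) = AM + MAᵀ + CMCᵀ on symmetric matrices. If for every real eigenvalue λ of 𝓛* possessing a nonzero positive semidefinite eigenmatrix one has λ > 0, then every positive semidefinite S with 𝓛*(S) ⪯ 0 satisfies S = 0. -/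
open Matrix Filter Topology

variable {n : ℕ}

namespace Stmt7

local notation "𝕄" => Matrix (Fin n) (Fin n) ℝ



lemma quad_form {M : 𝕄} (hM : M.PosSemidef) (x : Fin n → ℝ) : 0 ≤ x ⬝ᵥ M *ᵥ x := by
  simpa using hM.dotProduct_mulVec_nonneg x

lemma psd_smul {M : 𝕄} (hM : M.PosSemidef) {c : ℝ} (hc : 0 ≤ c) : (c • M).PosSemidef := by
  refine PosSemidef.of_dotProduct_mulVec_nonneg ?_ (fun x => ?_)
  · unfold Matrix.IsHermitian
    rw [conjTranspose_smul, hM.1]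
    simp
  · rw [smul_mulVec, dotProduct_smul]
    simpa using mul_nonneg hc (quad_form hM x)

lemma psd_diag {M : 𝕄} (hM : M.PosSemidef) (i : Fin n) : 0 ≤ M i i := by
  have := quad_form hM (Pi.single i 1)
  simpa [mulVec_single, dotProduct_single] using this

lemma psd_trace_nonneg {M : 𝕄} (hM : M.PosSemidef) : 0 ≤ M.trace := by
  exact Finset.sum_nonneg fun i _ => psd_diag hM i

lemma psd_trace_eq_zero {M : 𝕄} (hM : M.PosSemidef) (h : M.trace = 0) : M = 0 := by
  have hdiag : ∀ i, M i i = 0 := by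
    intro i
    have := Finset.sum_eq_zero_iff_of_nonneg (fun i _ => psd_diag hM i) |>.mp h
    exact this i (Finset.mem_univ i)
  have hcol : ∀ j, M *ᵥ Pi.single j 1 = 0 := by
    intro j
    rw [← hM.dotProduct_mulVec_zero_iff]
    simp [mulVec_single, dotProduct_single, hdiag j]
  ext i j
  have := congrFun (hcol j) i
  simpa [mulVec_single] using this

lemma psd_trace_pos {M : 𝕄} (hM : M.PosSemidef) (h0 : M ≠ 0) : 0 < M.trace := by
  rcases lt_or_eq_of_le (psd_trace_nonneg hM) with h | h
  · exact h
  · exact absurd (psd_trace_eq_zero hM h.symm) h0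





/-- change of variables for quadratic forms -/
lemma conj_quad (N B : 𝕄) (y : Fin n → ℝ) :
    (N *ᵥ y) ⬝ᵥ B *ᵥ (N *ᵥ y) = y ⬝ᵥ (Nᵀ * B * N) *ᵥ y := by
  rw [← mulVec_mulVec, ← mulVec_mulVec, dotProduct_mulVec y, vecMul_transpose]

lemma quad_bound (M : 𝕄) (d : Fin n → ℝ) (hdnn : ∀ i, 0 ≤ d i)
    (hsupp : ∀ i j, M i j ≠ 0 → d i ≠ 0 ∧ d j ≠ 0) :
    ∃ c : ℝ, 0 < c ∧ ∀ y : Fin n → ℝ, y ⬝ᵥ M *ᵥ y ≤ c * ∑ i, d i * y i ^ 2 := by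
  classical
  obtain ⟨δ, hδpos, hδle⟩ : ∃ δ : ℝ, 0 < δ ∧ ∀ i, d i ≠ 0 → δ ≤ d i := by
    by_cases hPne : (Finset.univ.filter (fun i => d i ≠ 0)).Nonempty
    · refine ⟨(Finset.univ.filter (fun i => d i ≠ 0)).inf' hPne d, ?_, ?_⟩
      · rw [Finset.lt_inf'_iff]
        intro i hi
        rcases (hdnn i).lt_or_eq with h | h
        · exact h
        · exact absurd h.symm (by simpa using hi)
      · intro i hi
        exact Finset.inf'_le d (by simpa using hi)
    · exact ⟨1, one_pos, fun i hi => absurd ⟨i, by simpa using hi⟩ hPne⟩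
  set K : ℝ := ∑ i, ∑ j, |M i j| with hK
  have hKnn : 0 ≤ K := Finset.sum_nonneg fun i _ => Finset.sum_nonneg fun j _ => abs_nonneg _
  have hKij : ∀ i j, |M i j| ≤ K := by
    intro i j
    have h1 : |M i j| ≤ ∑ j', |M i j'| :=
      Finset.single_le_sum (f := fun j' => |M i j'|) (fun j' _ => abs_nonneg _) (Finset.mem_univ j)
    have h2 : ∑ j', |M i j'| ≤ K :=
      Finset.single_le_sum (f := fun i' => ∑ j', |M i' j'|)
        (fun i' _ => Finset.sum_nonneg fun j' _ => abs_nonneg _) (Finset.mem_univ i)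
    linarith
  refine ⟨K * n / δ + 1, by positivity, fun y => ?_⟩
  set q : Fin n → ℝ := fun i => d i * y i ^ 2 with hq
  have hqnn : ∀ i, 0 ≤ q i := fun i => mul_nonneg (hdnn i) (sq_nonneg _)
  set Q : ℝ := ∑ i, q i with hQ
  have hQnn : 0 ≤ Q := Finset.sum_nonneg fun i _ => hqnn i
  have expand : y ⬝ᵥ M *ᵥ y = ∑ i, ∑ j, y i * M i j * y j := by
    simp only [dotProduct, mulVec, dotProduct, Finset.mul_sum]
    exact Finset.sum_congr rfl fun i _ => Finset.sum_congr rfl fun j _ => by ring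
  have perterm : ∀ i j, y i * M i j * y j ≤ K * (q i + q j) / (2 * δ) := by
    intro i j
    by_cases hMij : M i j = 0
    · rw [hMij]
      have : (0:ℝ) ≤ K * (q i + q j) / (2*δ) :=
        div_nonneg (mul_nonneg hKnn (add_nonneg (hqnn i) (hqnn j))) (by positivity)
      simpa using this
    · have hdi : δ ≤ d i := hδle i (hsupp i j hMij).1
      have hdj : δ ≤ d j := hδle j (hsupp i j hMij).2
      have step1 : y i * M i j * y j ≤ |M i j| * (y i ^ 2 + y j ^ 2) / 2 := by
        nlinarith [mul_nonneg (sub_nonneg.2 (le_abs_self (M i j))) (sq_nonneg (y i + y j)),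
          mul_nonneg (sub_nonneg.2 (neg_abs_le (M i j))) (sq_nonneg (y i - y j))]
      have step2 : |M i j| * (y i ^ 2 + y j ^ 2) / 2 ≤ K * (q i + q j) / (2 * δ) := by
        rw [div_le_div_iff₀ (by norm_num) (by positivity)]
        have e1 : δ * y i ^ 2 ≤ q i := by
          rw [hq]; exact mul_le_mul_of_nonneg_right hdi (sq_nonneg _)
        have e2 : δ * y j ^ 2 ≤ q j := by
          rw [hq]; exact mul_le_mul_of_nonneg_right hdj (sq_nonneg _)
        have hKM : |M i j| ≤ K := hKij i j
        nlinarith [mul_le_mul_of_nonneg_left e1 (abs_nonneg (M i j)),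
          mul_le_mul_of_nonneg_left e2 (abs_nonneg (M i j)),
          mul_le_mul_of_nonneg_right hKM (add_nonneg (hqnn i) (hqnn j)),
          sq_nonneg (y i), sq_nonneg (y j), hδpos.le]
      linarith
  calc y ⬝ᵥ M *ᵥ y = ∑ i, ∑ j, y i * M i j * y j := expand
    _ ≤ ∑ i, ∑ j, K * (q i + q j) / (2 * δ) :=
        Finset.sum_le_sum fun i _ => Finset.sum_le_sum fun j _ => perterm i j
    _ = (K / (2*δ)) * (∑ i, ∑ j, (q i + q j)) := by
        rw [Finset.mul_sum]
        exact Finset.sum_congr rfl fun i _ => by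
          rw [Finset.mul_sum]
          exact Finset.sum_congr rfl fun j _ => by ring
    _ = (K / (2*δ)) * (2 * n * Q) := by
        congr 1
        have hrow : ∀ i : Fin n, ∑ j : Fin n, (q i + q j) = n * q i + Q := by
          intro i
          rw [Finset.sum_add_distrib, Finset.sum_const, Finset.card_univ, Fintype.card_fin,
            nsmul_eq_mul]
        rw [Finset.sum_congr rfl fun i _ => hrow i, Finset.sum_add_distrib,
          ← Finset.mul_sum, Finset.sum_const, Finset.card_univ, Fintype.card_fin,
          nsmul_eq_mul]
        ring
    _ = (K * n / δ) * Q := by field_simp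
    _ ≤ (K * n / δ + 1) * Q := by nlinarith [hQnn]

lemma comparison {B1 B2 : 𝕄} (h1 : B1.PosSemidef) (h2 : B2.PosSemidef)
    (hker : ∀ x, B2 *ᵥ x = 0 → B1 *ᵥ x = 0) :
    ∃ c : ℝ, 0 < c ∧ (c • B2 - B1).PosSemidef := by
  classical
  have hH : B2.IsHermitian := h2.1
  set Uc : 𝕄 := (hH.eigenvectorUnitary : 𝕄) with hUc
  set d : Fin n → ℝ := hH.eigenvalues with hd
  have hdnn : ∀ i, 0 ≤ d i := fun i => h2.eigenvalues_nonneg i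
  have hspec : B2 = Uc * diagonal d * star Uc := by
    have := hH.spectral_theorem
    simpa [Function.comp] using this
  have hU1 : star Uc * Uc = 1 := by simp [hUc]
  have hU2 : Uc * star Uc = 1 := by simp [hUc]
  have hstarT : star Uc = Ucᵀ := by
    rw [Matrix.star_eq_conjTranspose, conjTranspose_eq_transpose_of_trivial]
  set M : 𝕄 := star Uc * B1 * Uc with hM
  have hMpsd : M.PosSemidef := by
    rw [hM, Matrix.star_eq_conjTranspose]
    exact h1.conjTranspose_mul_mul_same Uc
  have hB2U : B2 * Uc = Uc * diagonal d := by
    rw [hspec, Matrix.mul_assoc, hU1, Matrix.mul_one]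
  -- columns of M vanish where d vanishes
  have hcol : ∀ j, d j = 0 → ∀ i, M i j = 0 := by
    intro j hj i
    have hB2col : B2 *ᵥ (Uc *ᵥ Pi.single j 1) = 0 := by
      rw [mulVec_mulVec, hB2U, ← mulVec_mulVec, diagonal_mulVec_single]
      simp [hj]
    have hB1col : B1 *ᵥ (Uc *ᵥ Pi.single j 1) = 0 := hker _ hB2col
    have hz : M *ᵥ Pi.single j 1 = 0 := by
      rw [hM, ← mulVec_mulVec, ← mulVec_mulVec, hB1col, mulVec_zero]
    have := congrFun hz i
    simpa [mulVec_single] using this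
  have hrow : ∀ i, d i = 0 → ∀ j, M i j = 0 := by
    intro i hi j
    have hsym : M j i = M i j := by
      have hh := hMpsd.1
      calc M j i = Mᵀ i j := rfl
        _ = Mᴴ i j := by rw [conjTranspose_eq_transpose_of_trivial]
        _ = M i j := by rw [hh]
    rw [← hsym]; exact hcol i hi j
  obtain ⟨c, hcpos, hcbound⟩ := quad_bound M d hdnn (by
    intro i j hMij
    constructor
    · intro hdi; exact hMij (hrow i hdi j)
    · intro hdj; exact hMij (hcol j hdj i))
  refine ⟨c, hcpos, PosSemidef.of_dotProduct_mulVec_nonneg ?_ ?_⟩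
  · have h2h : B2ᴴ = B2 := h2.1
    have h1h : B1ᴴ = B1 := h1.1
    unfold Matrix.IsHermitian
    rw [conjTranspose_sub, conjTranspose_smul, h2h, h1h]
    simp
  · intro x
    rw [star_trivial, sub_mulVec, dotProduct_sub, smul_mulVec, dotProduct_smul]
    rw [sub_nonneg]
    set y : Fin n → ℝ := star Uc *ᵥ x with hy
    have hx : x = Uc *ᵥ y := by
      rw [hy, mulVec_mulVec, hU2, one_mulVec]
    have hq2 : x ⬝ᵥ B2 *ᵥ x = ∑ i, d i * y i ^ 2 := by
      rw [hx, hspec, hstarT, conj_quad]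
      have hdiag : Ucᵀ * (Uc * diagonal d * Ucᵀ) * Uc = diagonal d := by
        rw [← hstarT, Matrix.mul_assoc, Matrix.mul_assoc, hU1, Matrix.mul_one,
          ← Matrix.mul_assoc, hU1, Matrix.one_mul]
      rw [hdiag]
      simp only [dotProduct, mulVec_diagonal]
      exact Finset.sum_congr rfl fun i _ => by ring
    have hq1 : x ⬝ᵥ B1 *ᵥ x = y ⬝ᵥ M *ᵥ y := by
      rw [hx, conj_quad, hM, hstarT]
    rw [hq1, hq2]
    rw [smul_eq_mul]
    exact hcbound y





lemma isClosed_psd : IsClosed {H : 𝕄 | H.PosSemidef} := by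
  have heq : {H : 𝕄 | H.PosSemidef} =
      {H : 𝕄 | Hᴴ = H} ∩ ⋂ (x : Fin n → ℝ), {H : 𝕄 | 0 ≤ x ⬝ᵥ H *ᵥ x} := by
    ext H
    simp only [Set.mem_setOf_eq, Set.mem_inter_iff, Set.mem_iInter]
    constructor
    · exact fun hH => ⟨hH.1, fun x => quad_form hH x⟩
    · exact fun ⟨h1, h2⟩ => PosSemidef.of_dotProduct_mulVec_nonneg h1 (fun x => by simpa using h2 x)
  rw [heq]
  refine IsClosed.inter (isClosed_eq ?_ continuous_id) (isClosed_iInter fun x => ?_)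
  · exact Continuous.matrix_conjTranspose continuous_id
  · exact isClosed_le continuous_const
      (Continuous.dotProduct continuous_const
        (Continuous.matrix_mulVec continuous_id continuous_const))

/-- the face data set -/
def Del (S : 𝕄) : Set 𝕄 :=
  {H | H.PosSemidef ∧ (∀ x, S *ᵥ x = 0 → H *ᵥ x = 0) ∧ H.trace = 1}

lemma isClosed_Del (S : 𝕄) : IsClosed (Del S) := by
  have heq : Del S = {H : 𝕄 | H.PosSemidef} ∩
      ((⋂ (x : Fin n → ℝ), {H : 𝕄 | S *ᵥ x = 0 → H *ᵥ x = 0}) ∩ {H : 𝕄 | H.trace = 1}) := by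
    ext H
    simp [Del, Set.mem_iInter, and_assoc]
  rw [heq]
  refine isClosed_psd.inter (IsClosed.inter (isClosed_iInter fun x => ?_)
    (isClosed_eq (Continuous.matrix_trace continuous_id) continuous_const))
  by_cases hx : S *ᵥ x = 0
  · simp only [hx, forall_true_left]
    exact isClosed_eq (Continuous.matrix_mulVec continuous_id continuous_const) continuous_const
  · have huniv : {H : 𝕄 | S *ᵥ x = 0 → H *ᵥ x = 0} = Set.univ := by
      ext H; simp [hx]
    rw [huniv]
    exact isClosed_univ

lemma entry_bound {H : 𝕄} (hH : H.PosSemidef) (ht : H.trace = 1) (i j : Fin n) :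
    H i j ∈ Set.Icc (-1 : ℝ) 1 := by
  have hdiag : ∀ k, 0 ≤ H k k := psd_diag hH
  have hdle : ∀ k, H k k ≤ 1 := by
    intro k
    rw [← ht]
    exact Finset.single_le_sum (f := fun k => H k k) (fun k' _ => hdiag k') (Finset.mem_univ k)
  by_cases hij : i = j
  · subst hij; exact ⟨by linarith [hdiag i], hdle i⟩
  · have hsym : H j i = H i j := by
      have hh := hH.1
      calc H j i = Hᵀ i j := rfl
        _ = Hᴴ i j := by rw [conjTranspose_eq_transpose_of_trivial]
        _ = H i j := by rw [hh]
    have hsum2 : H i i + H j j ≤ 2 := by linarith [hdle i, hdle j]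
    have hplus := quad_form hH (Pi.single i 1 + Pi.single j 1)
    have hminus := quad_form hH (Pi.single i 1 - Pi.single j 1)
    have expandp : (Pi.single i 1 + Pi.single j 1) ⬝ᵥ H *ᵥ (Pi.single i 1 + Pi.single j 1)
        = H i i + H i j + H j i + H j j := by
      rw [mulVec_add, dotProduct_add, add_dotProduct, add_dotProduct]
      simp [mulVec_single, single_dotProduct]
      ring
    have expandm : (Pi.single i 1 - Pi.single j 1) ⬝ᵥ H *ᵥ (Pi.single i 1 - Pi.single j 1)
        = H i i - H i j - H j i + H j j := by
      rw [mulVec_sub, dotProduct_sub, sub_dotProduct, sub_dotProduct]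
      simp [mulVec_single, single_dotProduct]
      ring
    rw [expandp] at hplus
    rw [expandm] at hminus
    constructor <;> rw [← hsym] <;> linarith

lemma isCompact_Del (S : 𝕄) : IsCompact (Del S) := by
  have hsub : Del S ⊆ Set.univ.pi (fun _ : Fin n => Set.univ.pi
      (fun _ : Fin n => Set.Icc (-1 : ℝ) 1)) := by
    intro H hH
    intro i _ 
    intro j _
    exact entry_bound hH.1 hH.2.2 i j
  exact IsCompact.of_isClosed_subset
    (isCompact_univ_pi fun i => isCompact_univ_pi fun j => isCompact_Icc)
    (isClosed_Del S) hsub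


lemma psd_smul_sub {X Y : 𝕄} (h : (X - Y).PosSemidef) {c : ℝ} (hc : 0 ≤ c) :
    (c • X - c • Y).PosSemidef := by
  have := psd_smul h hc
  rwa [smul_sub] at this

lemma perron {S : 𝕄} (hS : S.PosSemidef) (hS0 : S ≠ 0)
    {Φ : 𝕄 → 𝕄} (hΦc : Continuous Φ)
    (hΦsmul : ∀ (c : ℝ) (H : 𝕄), Φ (c • H) = c • Φ H)
    (hΦsub : ∀ X Y : 𝕄, Φ (X - Y) = Φ X - Φ Y)
    (hΦF : ∀ H : 𝕄, H.PosSemidef → (∀ x, S *ᵥ x = 0 → H *ᵥ x = 0) →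
      (Φ H).PosSemidef ∧ (∀ x, S *ᵥ x = 0 → (Φ H) *ᵥ x = 0))
    {ε : ℝ} (hε : 0 < ε)
    (hstrict : ∀ H : 𝕄, H.PosSemidef → (∀ x, S *ᵥ x = 0 → H *ᵥ x = 0) →
      (Φ H - (ε * H.trace) • S).PosSemidef) :
    ∃ r : ℝ, 0 ≤ r ∧ ∃ H ∈ Del S, Φ H = r • H := by
  have htrS : 0 < S.trace := psd_trace_pos hS hS0
  have hSker : ∀ x, S *ᵥ x = 0 → S *ᵥ x = 0 := fun x hx => hx
  -- normalized S
  set H₀ : 𝕄 := (S.trace)⁻¹ • S with hH₀def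
  have hH₀ : H₀ ∈ Del S := by
    refine ⟨psd_smul hS (inv_nonneg.2 htrS.le), fun x hx => ?_, ?_⟩
    · rw [hH₀def, smul_mulVec, hx, smul_zero]
    · rw [hH₀def, trace_smul, smul_eq_mul, inv_mul_cancel₀ htrS.ne']
  -- upper bound for traces of Φ on Del S
  obtain ⟨HB, hHBmem, hHBmax⟩ := (isCompact_Del S).exists_isMaxOn ⟨H₀, hH₀⟩
    ((Continuous.matrix_trace hΦc).continuousOn)
  set B : ℝ := (Φ HB).trace with hBdef
  have hB0 : 0 ≤ B := by
    have h1 : (Φ H₀).PosSemidef := (hΦF H₀ hH₀.1 hH₀.2.1).1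
    exact le_trans (psd_trace_nonneg h1) (hHBmax hH₀)
  -- the compact search set
  set K : Set (ℝ × 𝕄) :=
    {p | p.1 ∈ Set.Icc (0:ℝ) B ∧ p.2 ∈ Del S ∧ (Φ p.2 - p.1 • p.2).PosSemidef} with hKdef
  have hKeq : K = (Set.Icc (0:ℝ) B ×ˢ Del S) ∩
      ((fun p : ℝ × 𝕄 => Φ p.2 - p.1 • p.2) ⁻¹' {M : 𝕄 | M.PosSemidef}) := by
    ext p
    simp only [hKdef, Set.mem_setOf_eq, Set.mem_inter_iff, Set.mem_prod, Set.mem_preimage]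
    tauto
  have hKclosed : IsClosed K := by
    rw [hKeq]
    refine ((isClosed_Icc.prod (isClosed_Del S)).inter (isClosed_psd.preimage ?_))
    exact (hΦc.comp continuous_snd).sub (continuous_fst.smul continuous_snd)
  have hKcomp : IsCompact K :=
    IsCompact.of_isClosed_subset
      (isCompact_Icc.prod (isCompact_Del S) :
        IsCompact ((Set.Icc (0:ℝ) B) ×ˢ Del S))
      hKclosed (fun p hp => ⟨hp.1, hp.2.1⟩)
  have hKne : K.Nonempty := by
    refine ⟨(0, H₀), ⟨le_refl 0, hB0⟩, hH₀, ?_⟩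
    have : Φ H₀ - (0:ℝ) • H₀ = Φ H₀ := by rw [zero_smul, sub_zero]
    rw [this]
    exact (hΦF H₀ hH₀.1 hH₀.2.1).1
  obtain ⟨⟨r, Hs⟩, hmem, hmax⟩ := hKcomp.exists_isMaxOn hKne continuous_fst.continuousOn
  obtain ⟨⟨hr0, hrB⟩, hHsmem, hDpsd⟩ := hmem
  refine ⟨r, hr0, Hs, hHsmem, ?_⟩
  by_contra hne
  set D : 𝕄 := Φ Hs - r • Hs with hDdef
  have hDne : D ≠ 0 := sub_ne_zero_of_ne hne
  have hDker : ∀ x, S *ᵥ x = 0 → D *ᵥ x = 0 := by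
    intro x hx
    rw [hDdef, sub_mulVec, (hΦF Hs hHsmem.1 hHsmem.2.1).2 x hx, smul_mulVec,
      hHsmem.2.1 x hx, smul_zero, sub_zero]
  have htrD : 0 < D.trace := psd_trace_pos hDpsd hDne
  set G : 𝕄 := Φ Hs with hGdef
  have hGpsd : G.PosSemidef := (hΦF Hs hHsmem.1 hHsmem.2.1).1
  have hGker : ∀ x, S *ᵥ x = 0 → G *ᵥ x = 0 := (hΦF Hs hHsmem.1 hHsmem.2.1).2
  have hGtrS : ε * S.trace ≤ G.trace := by
    have h1 := psd_trace_nonneg (hstrict Hs hHsmem.1 hHsmem.2.1)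
    rw [trace_sub, trace_smul, hHsmem.2.2, mul_one, smul_eq_mul] at h1
    linarith
  have htrG : 0 < G.trace := lt_of_lt_of_le (by positivity) hGtrS
  obtain ⟨t, ht, htS⟩ := comparison hGpsd hS hGker
  set δ : ℝ := ε * D.trace / t with hδdef
  have hδ : 0 < δ := by positivity
  have hδt : δ * t = ε * D.trace := by
    rw [hδdef]; field_simp
  have key : (Φ G - (r + δ) • G).PosSemidef := by
    have hΦD : Φ D = Φ G - r • G := by
      rw [hDdef, hΦsub, hΦsmul, hGdef]
    have heq : Φ G - (r + δ) • G = (Φ D - (ε * D.trace) • S) + δ • (t • S - G) := by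
      rw [hΦD, smul_sub, smul_smul, hδt]
      module
    rw [heq]
    exact (hstrict D hDpsd hDker).add (psd_smul htS hδ.le)
  set G' : 𝕄 := (G.trace)⁻¹ • G with hG'def
  have hG'mem : G' ∈ Del S := by
    refine ⟨psd_smul hGpsd (inv_nonneg.2 htrG.le), fun x hx => ?_, ?_⟩
    · rw [hG'def, smul_mulVec, hGker x hx, smul_zero]
    · rw [hG'def, trace_smul, smul_eq_mul, inv_mul_cancel₀ htrG.ne']
  have key' : (Φ G' - (r + δ) • G').PosSemidef := by
    have : Φ G' - (r + δ) • G' = (G.trace)⁻¹ • (Φ G - (r + δ) • G) := by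
      rw [hG'def, hΦsmul, smul_sub, smul_smul, smul_smul, mul_comm]
    rw [this]
    exact psd_smul key (inv_nonneg.2 htrG.le)
  have hrδB : r + δ ≤ B := by
    have h1 := psd_trace_nonneg key'
    rw [trace_sub, trace_smul, hG'mem.2.2, smul_eq_mul, mul_one] at h1
    have h2 : (Φ G').trace ≤ B := hHBmax hG'mem
    linarith
  have hmem' : ((r + δ, G') : ℝ × 𝕄) ∈ K :=
    ⟨⟨show (0:ℝ) ≤ r + δ by linarith, hrδB⟩, hG'mem, key'⟩
  have hfin : r + δ ≤ r := hmax hmem'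
  linarith


lemma quad_single (M : 𝕄) (i : Fin n) :
    (Pi.single i 1) ⬝ᵥ M *ᵥ (Pi.single i 1) = M i i := by
  simp [mulVec_single, single_dotProduct]

lemma eigen_le {S : 𝕄} (hS : S.PosSemidef)
    {Φ : 𝕄 → 𝕄}
    (hΦsmul : ∀ (c : ℝ) (H : 𝕄), Φ (c • H) = c • Φ H)
    (hΦsub : ∀ X Y : 𝕄, Φ (X - Y) = Φ X - Φ Y)
    (hΦF : ∀ H : 𝕄, H.PosSemidef → (∀ x, S *ᵥ x = 0 → H *ᵥ x = 0) →
      (Φ H).PosSemidef ∧ (∀ x, S *ᵥ x = 0 → (Φ H) *ᵥ x = 0))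
    {μ : ℝ} (hμ : 0 ≤ μ) (hμS : (μ • S - Φ S).PosSemidef)
    {r : ℝ} (hr : 0 ≤ r) {H : 𝕄} (hH : H ∈ Del S) (heig : Φ H = r • H) :
    r ≤ μ := by
  obtain ⟨t, ht, htH⟩ := comparison hH.1 hS hH.2.1
  by_contra hlt
  push_neg at hlt
  have hr' : 0 < r := lt_of_le_of_lt hμ hlt
  have chain : ∀ m : ℕ, ((t * μ ^ m) • S - (r ^ m) • H).PosSemidef ∧
      (∀ x, S *ᵥ x = 0 → ((t * μ ^ m) • S - (r ^ m) • H) *ᵥ x = 0) := by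
    intro m
    induction m with
    | zero =>
      constructor
      · simpa [pow_zero, mul_one] using htH
      · intro x hx
        rw [sub_mulVec, smul_mulVec, smul_mulVec, hx, hH.2.1 x hx]
        simp
    | succ m ih =>
      obtain ⟨ihpsd, ihker⟩ := ih
      set W : 𝕄 := (t * μ ^ m) • S - (r ^ m) • H with hWdef
      have hΦW : Φ W = (t * μ ^ m) • Φ S - (r ^ m) • (r • H) := by
        rw [hWdef, hΦsub, hΦsmul, hΦsmul, heig]
      have hΦWpsd : (Φ W).PosSemidef := (hΦF W ihpsd ihker).1
      have hsm : ((t * μ ^ m) • (μ • S - Φ S)).PosSemidef :=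
        psd_smul hμS (mul_nonneg ht.le (pow_nonneg hμ m))
      constructor
      · have heq : (t * μ ^ (m+1)) • S - (r ^ (m+1)) • H
            = Φ W + (t * μ ^ m) • (μ • S - Φ S) := by
          rw [hΦW, pow_succ, pow_succ]
          module
        rw [heq]
        exact hΦWpsd.add hsm
      · intro x hx
        rw [sub_mulVec, smul_mulVec, smul_mulVec, hx, hH.2.1 x hx]
        simp
  have hdiag0 : ∀ i, H i i ≤ 0 := by
    intro i
    have hbound : ∀ m : ℕ, r ^ m * H i i ≤ t * μ ^ m * S i i := by
      intro m
      have hq := quad_form (chain m).1 (Pi.single i 1)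
      rw [sub_mulVec, smul_mulVec, smul_mulVec, dotProduct_sub,
        dotProduct_smul, dotProduct_smul] at hq
      have e1 : (Pi.single i 1) ⬝ᵥ S *ᵥ (Pi.single i 1) = S i i := quad_single S i
      have e2 : (Pi.single i 1) ⬝ᵥ H *ᵥ (Pi.single i 1) = H i i := quad_single H i
      rw [e1, e2, smul_eq_mul, smul_eq_mul] at hq
      linarith
    have h4 : ∀ m : ℕ, H i i ≤ (t * S i i) * (μ / r) ^ m := by
      intro m
      have hstep : H i i ≤ (t * μ ^ m * S i i) / r ^ m :=
        (le_div_iff₀ (pow_pos hr' m)).2 (by nlinarith [hbound m])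
      have heqq : (t * μ ^ m * S i i) / r ^ m = (t * S i i) * (μ / r) ^ m := by
        rw [div_pow]; ring
      linarith [hstep, le_of_eq heqq]
    have hμr : 0 ≤ μ / r := div_nonneg hμ hr'.le
    have hμr1 : μ / r < 1 := (div_lt_one hr').2 hlt
    have hlim : Tendsto (fun m : ℕ => (t * S i i) * (μ / r) ^ m) atTop (𝓝 0) := by
      have := (tendsto_pow_atTop_nhds_zero_of_lt_one hμr hμr1).const_mul (t * S i i)
      simpa using this
    exact ge_of_tendsto hlim (Filter.Eventually.of_forall h4)
  have htr : H.trace ≤ 0 := by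
    rw [Matrix.trace]
    exact Finset.sum_nonpos fun i _ => hdiag0 i
  rw [hH.2.2] at htr
  linarith

lemma ker_invariant {A C S : 𝕄} (hS : S.PosSemidef)
    (hNpsd : (-(A * S + S * Aᵀ + C * S * Cᵀ)).PosSemidef)
    {x : Fin n → ℝ} (hx : S *ᵥ x = 0) :
    S *ᵥ (Aᵀ *ᵥ x) = 0 ∧ S *ᵥ (Cᵀ *ᵥ x) = 0 := by
  have hSsymm : Sᵀ = S := by
    rw [← conjTranspose_eq_transpose_of_trivial, hS.1]
  have hvm : x ᵥ* S = 0 := by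
    rw [← mulVec_transpose, hSsymm, hx]
  have t1 : x ⬝ᵥ (A * S) *ᵥ x = 0 := by
    rw [← mulVec_mulVec, hx, mulVec_zero, dotProduct_zero]
  have t2 : x ⬝ᵥ (S * Aᵀ) *ᵥ x = 0 := by
    rw [← mulVec_mulVec, dotProduct_mulVec, hvm, zero_dotProduct]
  have t3 : x ⬝ᵥ (C * S * Cᵀ) *ᵥ x = (Cᵀ *ᵥ x) ⬝ᵥ S *ᵥ (Cᵀ *ᵥ x) := by
    rw [← mulVec_mulVec, ← mulVec_mulVec, dotProduct_mulVec x C, ← mulVec_transpose]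
  have hq := quad_form hNpsd x
  rw [neg_mulVec, dotProduct_neg, add_mulVec, add_mulVec, dotProduct_add, dotProduct_add,
    t1, t2, t3] at hq
  have hq3 : (Cᵀ *ᵥ x) ⬝ᵥ S *ᵥ (Cᵀ *ᵥ x) = 0 :=
    le_antisymm (by linarith) (quad_form hS _)
  have hSC : S *ᵥ (Cᵀ *ᵥ x) = 0 :=
    (hS.dotProduct_mulVec_zero_iff (Cᵀ *ᵥ x)).mp (by simpa using hq3)
  refine ⟨?_, hSC⟩
  have hqx : x ⬝ᵥ (-(A * S + S * Aᵀ + C * S * Cᵀ)) *ᵥ x = 0 := by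
    rw [neg_mulVec, dotProduct_neg, add_mulVec, add_mulVec, dotProduct_add, dotProduct_add,
      t1, t2, t3, hq3]
    ring
  have hNx : (-(A * S + S * Aᵀ + C * S * Cᵀ)) *ᵥ x = 0 :=
    (hNpsd.dotProduct_mulVec_zero_iff x).mp (by simpa using hqx)
  have hexp : (-(A * S + S * Aᵀ + C * S * Cᵀ)) *ᵥ x
      = -(A *ᵥ (S *ᵥ x) + S *ᵥ (Aᵀ *ᵥ x) + C *ᵥ (S *ᵥ (Cᵀ *ᵥ x))) := by
    rw [neg_mulVec, add_mulVec, add_mulVec, ← mulVec_mulVec, ← mulVec_mulVec,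
      ← mulVec_mulVec, ← mulVec_mulVec]
  rw [hexp, hx, hSC] at hNx
  simp only [mulVec_zero, zero_add, add_zero] at hNx
  simpa using congrArg Neg.neg hNx


lemma main_aux {A C S : 𝕄}
    (h : ∀ (lam : ℝ) (H : 𝕄), H.PosSemidef → H ≠ 0 →
      A * H + H * Aᵀ + C * H * Cᵀ = lam • H → 0 < lam)
    (hS : S.PosSemidef) (hNpsd : (-(A * S + S * Aᵀ + C * S * Cᵀ)).PosSemidef)
    (hS0 : S ≠ 0) : False := by
  classical
  have htrS : 0 < S.trace := psd_trace_pos hS hS0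
  have hASA : (A * S * Aᵀ).PosSemidef := by
    have := hS.mul_mul_conjTranspose_same A
    rwa [conjTranspose_eq_transpose_of_trivial] at this
  obtain ⟨c₁, hc₁, hc₁S⟩ := comparison hASA hS (fun x hx => by
    rw [← mulVec_mulVec, ← mulVec_mulVec, (ker_invariant hS hNpsd hx).1, mulVec_zero])
  set s : ℕ → ℝ := fun j => (j:ℝ) + 1 with hsdef
  have hs1 : ∀ j, 1 ≤ s j := fun j => by
    simp only [hsdef, le_add_iff_nonneg_left]
    exact Nat.cast_nonneg j
  have hs0 : ∀ j, 0 < s j := fun j => lt_of_lt_of_le one_pos (hs1 j)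
  set Φ : ℕ → 𝕄 → 𝕄 := fun j H =>
    (A + s j • 1) * H * (A + s j • 1)ᵀ + s j • (C * H * Cᵀ) + ((s j)⁻¹ * H.trace) • S
    with hΦdef
  have hΦsmul : ∀ (j : ℕ) (c : ℝ) (H : 𝕄), Φ j (c • H) = c • Φ j H := by
    intro j c H
    simp only [hΦdef, Matrix.mul_smul, Matrix.smul_mul, trace_smul, smul_eq_mul, smul_add,
      smul_smul]
    module
  have hΦsub : ∀ (j : ℕ) (X Y : 𝕄), Φ j (X - Y) = Φ j X - Φ j Y := by
    intro j X Y
    simp only [hΦdef, Matrix.mul_sub, Matrix.sub_mul, trace_sub, smul_sub, mul_sub, sub_smul]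
    module
  have hΦc : ∀ j : ℕ, Continuous (Φ j) := by
    intro j
    refine Continuous.add (Continuous.add ?_ ?_) ?_
    · exact (continuous_const.matrix_mul continuous_id).matrix_mul continuous_const
    · exact (((continuous_const.matrix_mul continuous_id).matrix_mul
        continuous_const).const_smul (s j))
    · exact (continuous_const.mul (Continuous.matrix_trace continuous_id)).smul continuous_const
  have hΦF : ∀ (j : ℕ) (H : 𝕄), H.PosSemidef → (∀ x, S *ᵥ x = 0 → H *ᵥ x = 0) →
      (Φ j H).PosSemidef ∧ (∀ x, S *ᵥ x = 0 → (Φ j H) *ᵥ x = 0) := by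
    intro j H hHpsd hHker
    constructor
    · refine PosSemidef.add (PosSemidef.add ?_ ?_) ?_
      · have := hHpsd.mul_mul_conjTranspose_same (A + s j • 1)
        rwa [conjTranspose_eq_transpose_of_trivial] at this
      · refine psd_smul ?_ (hs0 j).le
        have := hHpsd.mul_mul_conjTranspose_same C
        rwa [conjTranspose_eq_transpose_of_trivial] at this
      · exact psd_smul hS (mul_nonneg (inv_nonneg.2 (hs0 j).le) (psd_trace_nonneg hHpsd))
    · intro x hx
      obtain ⟨hA1, hC1⟩ := ker_invariant hS hNpsd hx
      have hHA : H *ᵥ ((A + s j • 1)ᵀ *ᵥ x) = 0 := by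
        rw [transpose_add, transpose_smul, transpose_one, add_mulVec, smul_mulVec,
          one_mulVec, mulVec_add, mulVec_smul, hHker _ hA1, hHker x hx]
        simp
      have t1 : ((A + s j • 1) * H * (A + s j • 1)ᵀ) *ᵥ x = 0 := by
        rw [← mulVec_mulVec, ← mulVec_mulVec, hHA, mulVec_zero]
      have t2 : (s j • (C * H * Cᵀ)) *ᵥ x = 0 := by
        rw [smul_mulVec, ← mulVec_mulVec, ← mulVec_mulVec, hHker _ hC1, mulVec_zero,
          smul_zero]
      have t3 : (((s j)⁻¹ * H.trace) • S) *ᵥ x = 0 := by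
        rw [smul_mulVec, hx, smul_zero]
      rw [hΦdef]
      rw [add_mulVec, add_mulVec, t1, t2, t3]
      simp
  have hstrict : ∀ (j : ℕ) (H : 𝕄), H.PosSemidef → (∀ x, S *ᵥ x = 0 → H *ᵥ x = 0) →
      (Φ j H - ((s j)⁻¹ * H.trace) • S).PosSemidef := by
    intro j H hHpsd _
    have heq : Φ j H - ((s j)⁻¹ * H.trace) • S
        = (A + s j • 1) * H * (A + s j • 1)ᵀ + s j • (C * H * Cᵀ) := by
      rw [hΦdef]
      exact add_sub_cancel_right _ _
    rw [heq]
    refine PosSemidef.add ?_ ?_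
    · have := hHpsd.mul_mul_conjTranspose_same (A + s j • 1)
      rwa [conjTranspose_eq_transpose_of_trivial] at this
    · refine psd_smul ?_ (hs0 j).le
      have := hHpsd.mul_mul_conjTranspose_same C
      rwa [conjTranspose_eq_transpose_of_trivial] at this
  have hex : ∀ j : ℕ, ∃ (r : ℝ) (H : 𝕄), 0 ≤ r ∧ H ∈ Del S ∧ Φ j H = r • H ∧
      r ≤ s j * s j + c₁ + (s j)⁻¹ * S.trace := by
    intro j
    obtain ⟨r, hr0, H, hHmem, heig⟩ := perron hS hS0 (hΦc j) (hΦsmul j) (hΦsub j) (hΦF j)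
      (inv_pos.2 (hs0 j)) (hstrict j)
    refine ⟨r, H, hr0, hHmem, heig, ?_⟩
    have hμ0 : (0:ℝ) ≤ s j * s j + c₁ + (s j)⁻¹ * S.trace := by positivity
    refine eigen_le hS (hΦsmul j) (hΦsub j) (hΦF j) hμ0 ?_ hr0 hHmem heig
    have hexp : (s j * s j + c₁ + (s j)⁻¹ * S.trace) • S - Φ j S
        = (c₁ • S - A * S * Aᵀ) + s j • (-(A * S + S * Aᵀ + C * S * Cᵀ)) := by
      simp only [hΦdef, transpose_add, transpose_smul, transpose_one, Matrix.add_mul,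
        Matrix.mul_add, Matrix.smul_mul, Matrix.mul_smul, Matrix.mul_one, Matrix.one_mul]
      module
    rw [hexp]
    exact hc₁S.add (psd_smul hNpsd (hs0 j).le)
  choose rseq Hseq hr0 hmem heig hrle using hex
  haveI : FirstCountableTopology 𝕄 :=
    inferInstanceAs (FirstCountableTopology (Fin n → Fin n → ℝ))
  obtain ⟨Hl, hHlmem, φ, hφmono, hφtend⟩ := (isCompact_Del S).tendsto_subseq hmem
  have hE : ∀ j : ℕ, A * Hseq j + Hseq j * Aᵀ + C * Hseq j * Cᵀ
      = ((s j)⁻¹ * (rseq j - s j * s j)) • Hseq j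
        - (s j)⁻¹ • (A * Hseq j * Aᵀ) - ((s j)⁻¹ * (s j)⁻¹) • S := by
    intro j
    have h2 : Φ j (Hseq j) = A * Hseq j * Aᵀ
        + s j • (A * Hseq j + Hseq j * Aᵀ + C * Hseq j * Cᵀ)
        + (s j * s j) • Hseq j + (s j)⁻¹ • S := by
      have htr1 : (Hseq j).trace = 1 := (hmem j).2.2
      simp only [hΦdef, htr1, mul_one, transpose_add, transpose_smul, transpose_one,
        Matrix.add_mul, Matrix.mul_add, Matrix.smul_mul, Matrix.mul_smul,
        Matrix.mul_one, Matrix.one_mul]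
      module
    have h1 : A * Hseq j * Aᵀ + s j • (A * Hseq j + Hseq j * Aᵀ + C * Hseq j * Cᵀ)
        + (s j * s j) • Hseq j + (s j)⁻¹ • S = rseq j • Hseq j := by
      rw [← h2]; exact heig j
    apply smul_right_injective 𝕄 (hs0 j).ne'
    show s j • _ = s j • _
    have hss : s j * (s j)⁻¹ = 1 := mul_inv_cancel₀ (hs0 j).ne'
    rw [smul_sub, smul_sub, smul_smul, smul_smul, smul_smul, ← mul_assoc, ← mul_assoc,
      hss, one_mul, one_mul, one_smul]
    linear_combination (norm := module) h1
  set lam : ℝ := (A * Hl + Hl * Aᵀ + C * Hl * Cᵀ).trace with hlamdef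
  have hlambeq : ∀ j : ℕ, (s j)⁻¹ * (rseq j - s j * s j)
      = (A * Hseq j + Hseq j * Aᵀ + C * Hseq j * Cᵀ).trace
        + (s j)⁻¹ * (A * Hseq j * Aᵀ).trace + (s j)⁻¹ * (s j)⁻¹ * S.trace := by
    intro j
    have htr := congrArg Matrix.trace (hE j)
    rw [trace_sub, trace_sub, trace_smul, trace_smul, trace_smul, (hmem j).2.2, smul_eq_mul,
      smul_eq_mul, smul_eq_mul, mul_one] at htr
    linarith
  have hsinv : Tendsto (fun j : ℕ => (s j)⁻¹) atTop (𝓝 0) := by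
    apply Tendsto.inv_tendsto_atTop
    exact tendsto_atTop_add_const_right atTop 1 tendsto_natCast_atTop_atTop
  have hφat : Tendsto φ atTop atTop := hφmono.tendsto_atTop
  have hsinvφ : Tendsto (fun i => (s (φ i))⁻¹) atTop (𝓝 0) := hsinv.comp hφat
  have hLcont : Continuous (fun M : 𝕄 => A * M + M * Aᵀ + C * M * Cᵀ) := by
    refine Continuous.add (Continuous.add ?_ ?_) ?_
    · exact continuous_const.matrix_mul continuous_id
    · exact continuous_id.matrix_mul continuous_const
    · exact (continuous_const.matrix_mul continuous_id).matrix_mul continuous_const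
  have hAHAcont : Continuous (fun M : 𝕄 => A * M * Aᵀ) :=
    (continuous_const.matrix_mul continuous_id).matrix_mul continuous_const
  have hLtend : Tendsto (fun i => A * Hseq (φ i) + Hseq (φ i) * Aᵀ + C * Hseq (φ i) * Cᵀ)
      atTop (𝓝 (A * Hl + Hl * Aᵀ + C * Hl * Cᵀ)) :=
    (hLcont.tendsto Hl).comp hφtend
  have hAHA : Tendsto (fun i => A * Hseq (φ i) * Aᵀ) atTop (𝓝 (A * Hl * Aᵀ)) :=
    (hAHAcont.tendsto Hl).comp hφtend
  have htrL : Tendsto (fun i => (A * Hseq (φ i) + Hseq (φ i) * Aᵀ + C * Hseq (φ i) * Cᵀ).trace)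
      atTop (𝓝 lam) :=
    ((Continuous.matrix_trace hLcont).tendsto Hl).comp hφtend
  have htrAHA : Tendsto (fun i => (A * Hseq (φ i) * Aᵀ).trace)
      atTop (𝓝 ((A * Hl * Aᵀ).trace)) :=
    ((Continuous.matrix_trace hAHAcont).tendsto Hl).comp hφtend
  have hlambtend : Tendsto (fun i => (s (φ i))⁻¹ * (rseq (φ i) - s (φ i) * s (φ i)))
      atTop (𝓝 lam) := by
    have hsum := (htrL.add (hsinvφ.mul htrAHA)).add ((hsinvφ.mul hsinvφ).mul_const S.trace)
    have : lam + 0 * (A * Hl * Aᵀ).trace + 0 * 0 * S.trace = lam := by ring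
    rw [this] at hsum
    exact hsum.congr fun i => (hlambeq (φ i)).symm
  have hub : ∀ j : ℕ, (s j)⁻¹ * (rseq j - s j * s j) ≤ (c₁ + S.trace) * (s j)⁻¹ := by
    intro j
    have h1 := hrle j
    have h2 : (s j)⁻¹ ≤ 1 := inv_le_one_of_one_le₀ (hs1 j)
    have h3 : 0 < (s j)⁻¹ := inv_pos.2 (hs0 j)
    have h4 : rseq j - s j * s j ≤ c₁ + (s j)⁻¹ * S.trace := by linarith
    calc (s j)⁻¹ * (rseq j - s j * s j) ≤ (s j)⁻¹ * (c₁ + (s j)⁻¹ * S.trace) :=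
          mul_le_mul_of_nonneg_left h4 h3.le
      _ ≤ (s j)⁻¹ * (c₁ + S.trace) := by
          refine mul_le_mul_of_nonneg_left ?_ h3.le
          nlinarith [htrS.le]
      _ = (c₁ + S.trace) * (s j)⁻¹ := mul_comm _ _
  have hlam0 : lam ≤ 0 := by
    have hbt : Tendsto (fun i => (c₁ + S.trace) * (s (φ i))⁻¹) atTop (𝓝 0) := by
      have := hsinvφ.const_mul (c₁ + S.trace)
      simpa using this
    exact le_of_tendsto_of_tendsto hlambtend hbt
      (Filter.Eventually.of_forall fun i => hub (φ i))
  have hRtend : Tendsto (fun i =>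
      ((s (φ i))⁻¹ * (rseq (φ i) - s (φ i) * s (φ i))) • Hseq (φ i)
        - (s (φ i))⁻¹ • (A * Hseq (φ i) * Aᵀ) - ((s (φ i))⁻¹ * (s (φ i))⁻¹) • S)
      atTop (𝓝 (lam • Hl)) := by
    have t1 := hlambtend.smul hφtend
    have t2 := hsinvφ.smul hAHA
    have t3 := (hsinvφ.mul hsinvφ).smul_const S
    have := (t1.sub t2).sub t3
    simpa using this
  have hfinal : A * Hl + Hl * Aᵀ + C * Hl * Cᵀ = lam • Hl :=
    tendsto_nhds_unique hLtend (hRtend.congr fun i => (hE (φ i)).symm)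
  have hne : Hl ≠ 0 := by
    intro h0
    have := hHlmem.2.2
    rw [h0, trace_zero] at this
    norm_num at this
  have := h lam Hl hHlmem.1 hne hfinal
  linarith

end Stmt7

open Stmt7 in
theorem stmt7 {n : ℕ} (A C : Matrix (Fin n) (Fin n) ℝ)
    (h : ∀ (lam : ℝ) (H : Matrix (Fin n) (Fin n) ℝ), H.PosSemidef → H ≠ 0 →
      A * H + H * Aᵀ + C * H * Cᵀ = lam • H → 0 < lam) :
    ∀ S : Matrix (Fin n) (Fin n) ℝ, S.PosSemidef →
      (-(A * S + S * Aᵀ + C * S * Cᵀ)).PosSemidef → S = 0 := by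
  intro S hS hLS
  by_contra hS0
  exact main_aux h hS hLS hS0
end

section
/- Let A, C ∈ ℝ^{n×n}, B ∈ ℝ^{n×m}, and let V_{n-1} = span{im(MB) : M a word of length ≤ n−1 over {A,C}}. Then V_{n-1} is invariant under both A and C: A·V_{n-1} ⊆ V_{n-1} and C·V_{n-1} ⊆ V_{n-1}. -/
open Matrix

namespace Stmt9Aux

variable {n m : ℕ} (A C : Matrix (Fin n) (Fin n) ℝ) (B : Matrix (Fin n) (Fin m) ℝ)

lemma le_wordSpan {k : ℕ} {l : List (Matrix (Fin n) (Fin n) ℝ)}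
    (hl : l.length ≤ k) (hw : ∀ X ∈ l, X = A ∨ X = C) :
    LinearMap.range (Matrix.mulVecLin (l.prod * B)) ≤ wordSpan A C B k :=
  le_iSup_of_le l (le_iSup_of_le ⟨hl, hw⟩ le_rfl)

lemma wordSpan_mono {k k' : ℕ} (h : k ≤ k') : wordSpan A C B k ≤ wordSpan A C B k' :=
  iSup₂_le fun l hl => le_wordSpan A C B (hl.1.trans h) hl.2

lemma map_le_wordSpan_succ {k : ℕ} {X : Matrix (Fin n) (Fin n) ℝ} (hX : X = A ∨ X = C) :
    Submodule.map X.mulVecLin (wordSpan A C B k) ≤ wordSpan A C B (k + 1) := by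
  rw [wordSpan, Submodule.map_iSup]
  refine iSup_le fun l => ?_
  rw [Submodule.map_iSup]
  refine iSup_le fun hl => ?_
  rw [← LinearMap.range_comp, ← Matrix.mulVecLin_mul, ← Matrix.mul_assoc, ← List.prod_cons]
  exact le_wordSpan A C B (by simpa using Nat.succ_le_succ hl.1)
    (by intro Y hY; rcases List.mem_cons.mp hY with rfl | hY; exacts [hX, hl.2 Y hY])

lemma wordSpan_succ_le {k : ℕ} :
    wordSpan A C B (k + 1) ≤
      wordSpan A C B k ⊔ Submodule.map A.mulVecLin (wordSpan A C B k) ⊔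
        Submodule.map C.mulVecLin (wordSpan A C B k) := by
  refine iSup₂_le fun l hl => ?_
  rcases l with _ | ⟨X, t⟩
  · exact le_trans (le_wordSpan A C B (Nat.zero_le _) (by simp)) (le_sup_of_le_left le_sup_left)
  · have ht : LinearMap.range (Matrix.mulVecLin (t.prod * B)) ≤ wordSpan A C B k :=
      le_wordSpan A C B (Nat.succ_le_succ_iff.mp hl.1) fun Y hY => hl.2 Y (List.mem_cons_of_mem _ hY)
    have : LinearMap.range (Matrix.mulVecLin ((X :: t).prod * B)) =
        Submodule.map X.mulVecLin (LinearMap.range (Matrix.mulVecLin (t.prod * B))) := by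
      rw [List.prod_cons, Matrix.mul_assoc, Matrix.mulVecLin_mul, LinearMap.range_comp]
    rw [this]
    rcases hl.2 X (List.mem_cons_self (a := X) (l := t)) with rfl | rfl
    · exact le_sup_of_le_left (le_sup_of_le_right (Submodule.map_mono ht))
    · exact le_sup_of_le_right (Submodule.map_mono ht)

lemma stab_step {k : ℕ} (h : wordSpan A C B k = wordSpan A C B (k + 1)) :
    wordSpan A C B (k + 1) = wordSpan A C B (k + 2) := by
  refine le_antisymm (wordSpan_mono A C B (Nat.le_succ _)) ?_
  refine le_trans (wordSpan_succ_le A C B) ?_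
  refine sup_le (sup_le le_rfl ?_) ?_
  · have := map_le_wordSpan_succ A C B (k := k) (Or.inl rfl)
    rw [h] at this; exact this
  · have := map_le_wordSpan_succ A C B (k := k) (Or.inr rfl)
    rw [h] at this; exact this

lemma stab {k : ℕ} (h : wordSpan A C B k = wordSpan A C B (k + 1)) :
    ∀ t, k ≤ t → wordSpan A C B t = wordSpan A C B (t + 1) := by
  intro t ht
  induction t with
  | zero => obtain rfl := Nat.le_zero.mp ht; exact h
  | succ s ih =>
      rcases Nat.lt_or_ge k (s + 1) with hk | hk
      · exact stab_step A C B (ih (Nat.lt_succ_iff.mp hk))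
      · have : k = s + 1 := le_antisymm ht hk
        exact this ▸ h

lemma main : wordSpan A C B (n - 1) = wordSpan A C B (n - 1 + 1) := by
  by_contra hne
  -- wordSpan 0 ≠ ⊥
  have hbot : wordSpan A C B 0 ≠ ⊥ := by
    intro h0
    have hB : B.mulVecLin = 0 := by
      rw [← LinearMap.range_eq_bot, ← le_bot_iff, ← h0]
      have : LinearMap.range B.mulVecLin =
          LinearMap.range (Matrix.mulVecLin (([] : List (Matrix (Fin n) (Fin n) ℝ)).prod * B)) := by
        simp
      rw [this]
      exact le_wordSpan A C B le_rfl (by simp)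
    have hall : ∀ k, wordSpan A C B k = ⊥ := by
      intro k
      rw [← le_bot_iff]
      refine iSup₂_le fun l _ => ?_
      simp [Matrix.mulVecLin_mul, hB, LinearMap.range_comp]
    exact hne ((hall _).trans (hall _).symm)
  have hstrict : ∀ j, j ≤ n - 1 → wordSpan A C B j < wordSpan A C B (j + 1) := by
    intro j hj
    refine lt_of_le_of_ne (wordSpan_mono A C B (Nat.le_succ _)) fun h => ?_
    exact hne (stab A C B h (n - 1) hj)
  have hrank : ∀ j, j ≤ n - 1 → j + 1 ≤ Module.finrank ℝ (wordSpan A C B j) := by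
    intro j
    induction j with
    | zero =>
        intro _
        have : Module.finrank ℝ (wordSpan A C B 0) ≠ 0 := by
          intro h
          exact hbot (Submodule.finrank_eq_zero.mp h)
        omega
    | succ s ih =>
        intro hs
        have h1 := ih (by omega)
        have h2 := Submodule.finrank_lt_finrank_of_lt (hstrict s (by omega))
        omega
  have h1 := hrank (n - 1) le_rfl
  have h2 := Submodule.finrank_lt_finrank_of_lt (hstrict (n - 1) le_rfl)
  have h3 := Submodule.finrank_le (wordSpan A C B (n - 1 + 1))
  have h4 : Module.finrank ℝ (Fin n → ℝ) = n := by simp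
  omega

end Stmt9Aux

theorem stmt9 {n m : ℕ} (A C : Matrix (Fin n) (Fin n) ℝ)
    (B : Matrix (Fin n) (Fin m) ℝ) :
    ∀ v ∈ wordSpan A C B (n - 1),
      A.mulVec v ∈ wordSpan A C B (n - 1) ∧
        C.mulVec v ∈ wordSpan A C B (n - 1) := by
  intro v hv
  have key := Stmt9Aux.main A C B (n := n) (m := m)
  constructor
  · rw [key]
    exact Stmt9Aux.map_le_wordSpan_succ A C B (Or.inl rfl) ⟨v, hv, rfl⟩
  · rw [key]
    exact Stmt9Aux.map_le_wordSpan_succ A C B (Or.inr rfl) ⟨v, hv, rfl⟩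
end

section
/- Let A, C ∈ ℝ^{n×n}, B ∈ ℝ^{n×m}, and let P be orthogonal with PᵀAP = [[A₁₁,A₁₂],[0,A₂₂]], PᵀCP = [[C₁₁,C₁₂],[0,C₂₂]], PᵀB = [B₁;0] (blocks of sizes k, n−k). Suppose H ∈ 𝕊^n is positive semidefinite with −HA − AᵀH + CᵀHC = λH and BᵀH = 0. Write PᵀHP = [[H̃₁₁, K̃],[K̃ᵀ, H̃₂₂]]. Then H̃₁₁ is positive semidefinite, it satisfies −H̃₁₁A₁₁ − A₁₁ᵀH̃₁₁ + C₁₁ᵀH̃₁₁C₁₁ = λH̃₁₁ and B₁ᵀH̃₁₁ = 0; and if H̃₁₁ = 0 then K̃ = 0 and −H̃₂₂A₂₂ − A₂₂ᵀH̃₂₂ + C₂₂ᵀH̃₂₂C₂₂ = λH̃₂₂. -/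
open Matrix

lemma psd_exists_transpose_mul_self {a : Type*} [Fintype a] (M : Matrix a a ℝ)
    (hM : M.PosSemidef) : ∃ N : Matrix a a ℝ, M = Nᵀ * N := by
  classical
  open scoped MatrixOrder in
  refine ⟨CFC.sqrt M, ?_⟩
  open scoped MatrixOrder in
  have h1 := CFC.sqrt_mul_sqrt_self M hM.nonneg
  open scoped MatrixOrder in
  have h2 : (CFC.sqrt M)ᵀ = CFC.sqrt M := by
    have := (CFC.sqrt_nonneg M).posSemidef.isHermitian
    simpa [IsHermitian, conjTranspose_eq_transpose_of_trivial] using this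
  rw [h2, h1]

lemma psd_offdiag_zero {a b : Type*} [Fintype a] [Fintype b]
    (M : Matrix (a ⊕ b) (a ⊕ b) ℝ) (hM : M.PosSemidef)
    (h11 : M.toBlocks₁₁ = 0) : M.toBlocks₁₂ = 0 := by
  obtain ⟨N, rfl⟩ := psd_exists_transpose_mul_self M hM
  ext i j
  have hcol : ∀ c, N c (Sum.inl i) = 0 := by
    have h0 : ∑ c, N c (Sum.inl i) * N c (Sum.inl i) = 0 := by
      have := congrFun (congrFun h11 i) i
      simpa [toBlocks₁₁, mul_apply] using this
    intro c
    have := (Finset.sum_eq_zero_iff_of_nonneg (fun c _ => mul_self_nonneg _)).mp h0 c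
      (Finset.mem_univ c)
    exact mul_self_eq_zero.mp this
  simp [toBlocks₁₂, mul_apply, hcol]

theorem stmt18 {k l m : ℕ}
    (A C P : Matrix (Fin k ⊕ Fin l) (Fin k ⊕ Fin l) ℝ)
    (B : Matrix (Fin k ⊕ Fin l) (Fin m) ℝ)
    (hP : Pᵀ * P = 1)
    (A₁₁ : Matrix (Fin k) (Fin k) ℝ) (A₁₂ : Matrix (Fin k) (Fin l) ℝ)
    (A₂₂ : Matrix (Fin l) (Fin l) ℝ)
    (C₁₁ : Matrix (Fin k) (Fin k) ℝ) (C₁₂ : Matrix (Fin k) (Fin l) ℝ)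
    (C₂₂ : Matrix (Fin l) (Fin l) ℝ)
    (B₁ : Matrix (Fin k) (Fin m) ℝ)
    (hA : Pᵀ * A * P = Matrix.fromBlocks A₁₁ A₁₂ 0 A₂₂)
    (hC : Pᵀ * C * P = Matrix.fromBlocks C₁₁ C₁₂ 0 C₂₂)
    (hB : Pᵀ * B = Matrix.fromRows B₁ 0)
    (H : Matrix (Fin k ⊕ Fin l) (Fin k ⊕ Fin l) ℝ) (hH : H.PosSemidef)
    (lam : ℝ)
    (heig : -(H * A) - Aᵀ * H + Cᵀ * H * C = lam • H)
    (hBH : Bᵀ * H = 0) :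
    let H₁₁ := (Pᵀ * H * P).toBlocks₁₁
    let K := (Pᵀ * H * P).toBlocks₁₂
    let H₂₂ := (Pᵀ * H * P).toBlocks₂₂
    H₁₁.PosSemidef ∧
      -(H₁₁ * A₁₁) - A₁₁ᵀ * H₁₁ + C₁₁ᵀ * H₁₁ * C₁₁ = lam • H₁₁ ∧
      B₁ᵀ * H₁₁ = 0 ∧
      (H₁₁ = 0 → K = 0 ∧
        -(H₂₂ * A₂₂) - A₂₂ᵀ * H₂₂ + C₂₂ᵀ * H₂₂ * C₂₂ = lam • H₂₂) := by
  intro H₁₁ K H₂₂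
  have hPPt : P * Pᵀ = 1 := mul_eq_one_comm.mp hP
  set M : Matrix (Fin k ⊕ Fin l) (Fin k ⊕ Fin l) ℝ := Pᵀ * H * P with hMdef
  have hPtH : (Pᵀ)ᴴ = P := by
    ext i j; simp [conjTranspose_apply]
  have hMpsd : M.PosSemidef := by
    have := hH.mul_mul_conjTranspose_same Pᵀ
    rwa [hPtH] at this
  have hMsymm : Mᵀ = M := by
    have := hMpsd.isHermitian
    simpa [IsHermitian, conjTranspose_eq_transpose_of_trivial] using this
  -- block decomposition of M
  have hM21 : M.toBlocks₂₁ = Kᵀ := by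
    ext i j
    have := congrFun (congrFun hMsymm (Sum.inr i)) (Sum.inl j)
    simpa [K, toBlocks₂₁, toBlocks₁₂, transpose_apply] using this.symm
  have hMblocks : M = fromBlocks H₁₁ K Kᵀ H₂₂ := by
    rw [← fromBlocks_toBlocks M, hM21]
  -- conjugation identity
  have key : ∀ X Y : Matrix (Fin k ⊕ Fin l) (Fin k ⊕ Fin l) ℝ,
      (Pᵀ * X * P) * (Pᵀ * Y * P) = Pᵀ * (X * Y) * P := by
    intro X Y
    calc (Pᵀ * X * P) * (Pᵀ * Y * P) = Pᵀ * X * (P * Pᵀ) * (Y * P) := by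
          simp only [Matrix.mul_assoc]
      _ = Pᵀ * (X * Y) * P := by rw [hPPt]; simp only [Matrix.mul_one, Matrix.mul_assoc]
  have hAt : (Pᵀ * A * P)ᵀ = Pᵀ * Aᵀ * P := by
    simp [Matrix.transpose_mul, Matrix.mul_assoc]
  have hCt : (Pᵀ * C * P)ᵀ = Pᵀ * Cᵀ * P := by
    simp [Matrix.transpose_mul, Matrix.mul_assoc]
  -- transformed eigen equation
  have heq : -(M * (Pᵀ * A * P)) - (Pᵀ * A * P)ᵀ * M + (Pᵀ * C * P)ᵀ * M * (Pᵀ * C * P)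
      = lam • M := by
    rw [hMdef, hAt, hCt, key, key, key, key]
    have : Pᵀ * (-(H * A) - Aᵀ * H + Cᵀ * H * C) * P = Pᵀ * (lam • H) * P := by rw [heig]
    calc -(Pᵀ * (H * A) * P) - Pᵀ * (Aᵀ * H) * P + Pᵀ * (Cᵀ * H * C) * P
        = Pᵀ * (-(H * A) - Aᵀ * H + Cᵀ * H * C) * P := by
          simp [Matrix.mul_add, Matrix.add_mul, Matrix.mul_sub, Matrix.sub_mul,
            Matrix.mul_neg, Matrix.neg_mul, Matrix.mul_assoc]
      _ = Pᵀ * (lam • H) * P := this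
      _ = lam • (Pᵀ * H * P) := by
          simp [Matrix.mul_smul, Matrix.smul_mul]
  rw [hA, hC, hMblocks] at heq
  rw [fromBlocks_transpose, fromBlocks_transpose, fromBlocks_multiply, fromBlocks_multiply,
    fromBlocks_multiply, fromBlocks_multiply, fromBlocks_neg, fromBlocks_smul] at heq
  have heq' := fromBlocks_inj.mp (by
    simpa [sub_eq_add_neg, fromBlocks_neg, fromBlocks_add] using heq)
  -- BᵀH equation
  have hBH' : (fromRows B₁ (0 : Matrix (Fin l) (Fin m) ℝ))ᵀ * M = 0 := by
    have h1 : Bᵀ * P * (Pᵀ * H * P) = (Pᵀ * B)ᵀ * M := by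
      rw [hMdef, Matrix.transpose_mul, Matrix.transpose_transpose]
    have h2 : Bᵀ * P * (Pᵀ * H * P) = 0 := by
      calc Bᵀ * P * (Pᵀ * H * P) = Bᵀ * (P * Pᵀ) * (H * P) := by simp only [Matrix.mul_assoc]
        _ = (Bᵀ * H) * P := by rw [hPPt]; simp only [Matrix.mul_one, Matrix.mul_assoc]
        _ = 0 := by rw [hBH, Matrix.zero_mul]
    rw [← hB, ← h1, h2]
  rw [hMblocks, transpose_fromRows, fromCols_mul_fromBlocks] at hBH'
  have hB1H : B₁ᵀ * H₁₁ = 0 := by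
    ext i j
    have := congrFun (congrFun hBH' i) (Sum.inl j)
    simpa [fromCols] using this
  refine ⟨?_, ?_, hB1H, ?_⟩
  · have : H₁₁ = M.submatrix Sum.inl Sum.inl := by ext i j; rfl
    rw [this]; exact hMpsd.submatrix _
  · have := heq'.1
    simpa [sub_eq_add_neg] using this
  · intro h0
    have hK : K = 0 := psd_offdiag_zero M hMpsd h0
    refine ⟨hK, ?_⟩
    have h2 := heq'.2.2.2
    rw [hK, h0] at h2
    simpa [sub_eq_add_neg] using h2
end
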